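/- arXiv:1508.02196 — 5 statements merged into one kernel-verified Lean document; each statement's English description precedes it below -/
import Mathlib

section
/- Suppose f : ℝ×ℝ → ℝ maps [0,1]×[0,1] into [0,1], z ↦ f(z,ε) is continuous on [0,1] for each ε ∈ [0,1], f(x,0)=0 for all x ∈ [0,1], and for each fixed x ∈ (0,1] the map ε ↦ f(x,ε) is strictly increasing on (0,1]. Suppose g : ℝ → ℝ maps [0,1] into [0,1], is strictly increasing on (0,1], and satisfies g(0)=0. Then for every x ∈ (0,1] and all ε₁, ε₂ with 0 ≤ ε₁ < ε₂ ≤ 1, U(x;ε₂) < U(x;ε₁); that is, the potential function is strictly decreasing in ε. -/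
open Set intervalIntegral

/-!
Only the term `F(g(x); ε)` of `U(x; ε)` depends on `ε`. Since `g x > 0`, it is the integral of
`f(·, ε)` over a nondegenerate interval, and there the integrand is strictly increasing in `ε`:
on `(0, 1]` by hypothesis, and from `ε = 0` because `f(z, 0) = 0 < f(z, ε)`, as `f ≥ 0`.
-/

/-- `G g x = ∫₀ˣ g(z) dz`. -/
noncomputable def Gfun (g : ℝ → ℝ) (x : ℝ) : ℝ := ∫ z in (0:ℝ)..x, g z

/-- `F f y ε = ∫₀ʸ f(z,ε) dz`. -/
noncomputable def Ffun (f : ℝ → ℝ → ℝ) (y ε : ℝ) : ℝ := ∫ z in (0:ℝ)..y, f z ε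

/-- The potential function `U(x;ε) = x·g(x) − G(x) − F(g(x);ε)`. -/
noncomputable def Ufun (f : ℝ → ℝ → ℝ) (g : ℝ → ℝ) (x ε : ℝ) : ℝ :=
  x * g x - Gfun g x - Ffun f (g x) ε

theorem pos_of_strictMonoOn_Ioc {h : ℝ → ℝ} {b t : ℝ} (hmono : StrictMonoOn h (Ioc 0 b))
    (hnonneg : ∀ s ∈ Ioc 0 b, 0 ≤ h s) (ht : t ∈ Ioc 0 b) : 0 < h t := by
  have hhalf : t / 2 ∈ Ioc 0 b := ⟨by linarith [ht.1], by linarith [ht.1, ht.2]⟩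
  calc 0 ≤ h (t / 2) := hnonneg _ hhalf
    _ < h t := hmono hhalf ht (by linarith [ht.1])

theorem strictMonoOn_Icc_of_Ioc {h : ℝ → ℝ} {b : ℝ} (hmono : StrictMonoOn h (Ioc 0 b))
    (hnonneg : ∀ s ∈ Ioc 0 b, 0 ≤ h s) (h0 : h 0 = 0) : StrictMonoOn h (Icc 0 b) := by
  intro s hs t ht hst
  have ht' : t ∈ Ioc 0 b := ⟨hs.1.trans_lt hst, ht.2⟩
  rcases hs.1.eq_or_lt with rfl | hs_pos
  · rw [h0]
    exact pos_of_strictMonoOn_Ioc hmono hnonneg ht'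
  · exact hmono ⟨hs_pos, hs.2⟩ ht' hst

theorem Ufun_lt_Ufun_iff {f : ℝ → ℝ → ℝ} {g : ℝ → ℝ} {x ε₁ ε₂ : ℝ} :
    Ufun f g x ε₂ < Ufun f g x ε₁ ↔ Ffun f (g x) ε₁ < Ffun f (g x) ε₂ := by
  simp only [Ufun, sub_lt_sub_iff_left]

theorem Ffun_lt_Ffun {f : ℝ → ℝ → ℝ} {y ε₁ ε₂ : ℝ} (hy : 0 < y)
    (hcont₁ : ContinuousOn (fun z => f z ε₁) (Icc 0 y))
    (hcont₂ : ContinuousOn (fun z => f z ε₂) (Icc 0 y))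
    (hlt : ∀ z ∈ Ioc 0 y, f z ε₁ < f z ε₂) : Ffun f y ε₁ < Ffun f y ε₂ :=
  integral_lt_integral_of_continuousOn_of_le_of_exists_lt hy hcont₁ hcont₂
    (fun z hz => (hlt z hz).le) ⟨y, ⟨hy.le, le_rfl⟩, hlt y ⟨hy, le_rfl⟩⟩

theorem potential_strictAnti_in_eps_general
    (f : ℝ → ℝ → ℝ) (g : ℝ → ℝ)
    (hf_maps : ∀ x ∈ Icc (0:ℝ) 1, ∀ ε ∈ Icc (0:ℝ) 1, f x ε ∈ Icc (0:ℝ) 1)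
    (hf_cont : ∀ ε ∈ Icc (0:ℝ) 1, ContinuousOn (fun z => f z ε) (Icc (0:ℝ) 1))
    (hf0 : ∀ x ∈ Icc (0:ℝ) 1, f x 0 = 0)
    (hf_mono : ∀ x ∈ Ioc (0:ℝ) 1, StrictMonoOn (fun ε => f x ε) (Ioc (0:ℝ) 1))
    (hg_maps : MapsTo g (Icc (0:ℝ) 1) (Icc (0:ℝ) 1))
    (hg_mono : StrictMonoOn g (Ioc (0:ℝ) 1)) :
    ∀ x ∈ Ioc (0:ℝ) 1, ∀ ε₁ ε₂ : ℝ, 0 ≤ ε₁ → ε₁ < ε₂ → ε₂ ≤ 1 →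
      Ufun f g x ε₂ < Ufun f g x ε₁ := by
  intro x hx ε₁ ε₂ hε₁ h12 hε₂
  have hε₁I : ε₁ ∈ Icc (0:ℝ) 1 := ⟨hε₁, (h12.trans_le hε₂).le⟩
  have hε₂I : ε₂ ∈ Icc (0:ℝ) 1 := ⟨hε₁.trans h12.le, hε₂⟩
  have hgx_pos : 0 < g x :=
    pos_of_strictMonoOn_Ioc hg_mono (fun s hs => (hg_maps (Ioc_subset_Icc_self hs)).1) hx
  have hgx_le : g x ≤ 1 := (hg_maps (Ioc_subset_Icc_self hx)).2
  have hsub : Icc 0 (g x) ⊆ Icc 0 1 := Icc_subset_Icc le_rfl hgx_le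
  rw [Ufun_lt_Ufun_iff]
  refine Ffun_lt_Ffun hgx_pos ((hf_cont ε₁ hε₁I).mono hsub) ((hf_cont ε₂ hε₂I).mono hsub)
    fun z hz => ?_
  have hzI : z ∈ Ioc (0:ℝ) 1 := ⟨hz.1, hz.2.trans hgx_le⟩
  have hf_nonneg : ∀ ε ∈ Ioc (0:ℝ) 1, 0 ≤ f z ε :=
    fun ε hε => (hf_maps z (Ioc_subset_Icc_self hzI) ε (Ioc_subset_Icc_self hε)).1
  exact strictMonoOn_Icc_of_Ioc (hf_mono z hzI) hf_nonneg (hf0 z (Ioc_subset_Icc_self hzI))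
    hε₁I hε₂I h12

/-- the potential function is strictly decreasing in `ε`. -/
theorem potential_strictAnti_in_eps
    (f : ℝ → ℝ → ℝ) (g : ℝ → ℝ)
    (hf_maps : ∀ x ∈ Icc (0:ℝ) 1, ∀ ε ∈ Icc (0:ℝ) 1, f x ε ∈ Icc (0:ℝ) 1)
    (hf_cont : ∀ ε ∈ Icc (0:ℝ) 1, ContinuousOn (fun z => f z ε) (Icc (0:ℝ) 1))
    (hf0 : ∀ x ∈ Icc (0:ℝ) 1, f x 0 = 0)
    (hf_mono : ∀ x ∈ Ioc (0:ℝ) 1, StrictMonoOn (fun ε => f x ε) (Ioc (0:ℝ) 1))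
    (hg_maps : MapsTo g (Icc (0:ℝ) 1) (Icc (0:ℝ) 1))
    (hg_mono : StrictMonoOn g (Ioc (0:ℝ) 1))
    (hg0 : g 0 = 0) :
    ∀ x ∈ Ioc (0:ℝ) 1, ∀ ε₁ ε₂ : ℝ, 0 ≤ ε₁ → ε₁ < ε₂ → ε₂ ≤ 1 →
      Ufun f g x ε₂ < Ufun f g x ε₁ :=
  potential_strictAnti_in_eps_general f g hf_maps hf_cont hf0 hf_mono hg_maps hg_mono
end

section
/- Let ε ∈ [0,1]. Suppose g : ℝ → ℝ maps [0,1] into [0,1], is differentiable at every point of [0,1] (one-sided at the endpoints) with g'(x) > 0 for all x ∈ (0,1], and satisfies g(0)=0, and suppose z ↦ f(z,ε) is continuous on [0,1] with f(0,ε)=0. Then for every x ∈ [0,1]: x is a fixed point of the recursion, i.e. x = f(g(x),ε), if and only if x is a stationary point of the potential function, i.e. the derivative of U(·;ε) within [0,1] at x equals 0. -/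
open Set intervalIntegral

theorem hasDerivWithinAt_integral_Icc {h : ℝ → ℝ} {a b x : ℝ} (hh : ContinuousOn h (Icc a b))
    (hx : x ∈ Icc a b) :
    HasDerivWithinAt (fun y => ∫ z in a..y, h z) (h x) (Icc a b) x := by
  have : Fact (x ∈ Icc a b) := ⟨hx⟩
  refine integral_hasDerivWithinAt_right ?_
    (hh.stronglyMeasurableAtFilter_nhdsWithin measurableSet_Icc x) (hh x hx)
  refine (hh.mono ?_).intervalIntegrable
  rw [uIcc_of_le hx.1]
  exact Icc_subset_Icc le_rfl hx.2

theorem hasDerivWithinAt_Ufun {f : ℝ → ℝ → ℝ} {g : ℝ → ℝ} {ε x g'x : ℝ}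
    (hg_maps : MapsTo g (Icc 0 1) (Icc 0 1)) (hg_cont : ContinuousOn g (Icc 0 1))
    (hg_deriv : HasDerivWithinAt g g'x (Icc 0 1) x)
    (hf_cont : ContinuousOn (fun z => f z ε) (Icc 0 1)) (hx : x ∈ Icc (0:ℝ) 1) :
    HasDerivWithinAt (fun y => Ufun f g y ε) ((x - f (g x) ε) * g'x) (Icc 0 1) x := by
  have hG : HasDerivWithinAt (Gfun g) (g x) (Icc 0 1) x :=
    hasDerivWithinAt_integral_Icc hg_cont hx
  have hF : HasDerivWithinAt (fun y => Ffun f y ε) (f (g x) ε) (Icc 0 1) (g x) :=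
    hasDerivWithinAt_integral_Icc hf_cont (hg_maps hx)
  have hxg : HasDerivWithinAt (fun y => y * g y) (1 * g x + x * g'x) (Icc 0 1) x :=
    (hasDerivWithinAt_id x _).mul hg_deriv
  exact ((hxg.sub hG).sub (hF.comp x hg_deriv hg_maps)).congr_deriv (by ring)

theorem fixed_point_iff_stationary_general
    (f : ℝ → ℝ → ℝ) (g g' : ℝ → ℝ) (ε : ℝ)
    (hg_maps : MapsTo g (Icc (0:ℝ) 1) (Icc (0:ℝ) 1))
    (hg_deriv : ∀ x ∈ Icc (0:ℝ) 1, HasDerivWithinAt g (g' x) (Icc (0:ℝ) 1) x)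
    (hg'_pos : ∀ x ∈ Ioc (0:ℝ) 1, 0 < g' x)
    (hg0 : g 0 = 0)
    (hf_cont : ContinuousOn (fun z => f z ε) (Icc (0:ℝ) 1))
    (hf0 : f 0 ε = 0) :
    ∀ x ∈ Icc (0:ℝ) 1,
      (x = f (g x) ε ↔
        derivWithin (fun y => Ufun f g y ε) (Icc (0:ℝ) 1) x = 0) := by
  intro x hx
  have hg_cont : ContinuousOn g (Icc 0 1) := fun y hy => (hg_deriv y hy).continuousWithinAt
  rw [(hasDerivWithinAt_Ufun hg_maps hg_cont (hg_deriv x hx) hf_cont hx).derivWithin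
    (uniqueDiffOn_Icc one_pos x hx)]
  rcases hx.1.eq_or_lt with rfl | hx0
  · simp [hg0, hf0]
  · rw [mul_eq_zero, sub_eq_zero, or_iff_left (hg'_pos x ⟨hx0, hx.2⟩).ne']

/-- `x ∈ [0,1]` is a fixed point of the recursion
`x = f(g(x),ε)` iff it is a stationary point of the potential function,
i.e. the derivative of `U(·;ε)` within `[0,1]` at `x` vanishes. -/
theorem fixed_point_iff_stationary
    (f : ℝ → ℝ → ℝ) (g g' : ℝ → ℝ) (ε : ℝ) (hε : ε ∈ Icc (0:ℝ) 1)
    (hg_maps : MapsTo g (Icc (0:ℝ) 1) (Icc (0:ℝ) 1))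
    (hg_deriv : ∀ x ∈ Icc (0:ℝ) 1, HasDerivWithinAt g (g' x) (Icc (0:ℝ) 1) x)
    (hg'_pos : ∀ x ∈ Ioc (0:ℝ) 1, 0 < g' x)
    (hg0 : g 0 = 0)
    (hf_cont : ContinuousOn (fun z => f z ε) (Icc (0:ℝ) 1))
    (hf0 : f 0 ε = 0) :
    ∀ x ∈ Icc (0:ℝ) 1,
      (x = f (g x) ε ↔
        derivWithin (fun y => Ufun f g y ε) (Icc (0:ℝ) 1) x = 0) :=
  fixed_point_iff_stationary_general f g g' ε hg_maps hg_deriv hg'_pos hg0 hf_cont hf0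
end

section
/- Suppose f : ℝ×ℝ → ℝ maps [0,1]×[0,1] into [0,1], is nondecreasing in its second argument on [0,1] for each fixed first argument in [0,1], and x ↦ f(x,ε) is nondecreasing and continuous on [0,1] for each ε ∈ [0,1]; suppose g : ℝ → ℝ maps [0,1] into [0,1] and is nondecreasing and continuous on [0,1]. Suppose there exists ε₀ ∈ [0,1] with f(g(x),ε₀) < x for all x ∈ (0,1], and define ε^BP = sup{ε ∈ [0,1] : f(g(x),ε) < x for all x ∈ (0,1]}. Then for every ε ∈ [0,1] with ε < ε^BP, the sequence defined by x⁽⁰⁾ = 1 and x⁽ⁱ⁺¹⁾ = f(g(x⁽ⁱ⁾),ε) converges to 0. -/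
/-!
Below the threshold there is some `ε' > ε` with `f (g x) ε' < x` on `(0, 1]`, and monotonicity in
the channel parameter transfers this to `ε`. So `h := f (g ·) ε` is a continuous self-map of
`[0, 1]` below the diagonal on `(0, 1]` (and, by continuity, `h 0 ≤ 0`). The orbit of `1` is then
nonincreasing and bounded below, its limit is a fixed point of `h`, and the only one is `0`.
-/

open Set Filter Topology Function

theorem Set.MapsTo.recursion_mem {X : Type*} {h : X → X} {s : Set X} {x : ℕ → X}
    (hmaps : MapsTo h s s) (hx0 : x 0 ∈ s) (hrec : ∀ n, x (n + 1) = h (x n)) : ∀ n, x n ∈ s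
  | 0 => hx0
  | n + 1 => hrec n ▸ hmaps (hmaps.recursion_mem hx0 hrec n)

theorem ContinuousOn.isFixedPt_of_tendsto_recursion {X : Type*} [TopologicalSpace X] [T2Space X]
    {h : X → X} {s : Set X} {x : ℕ → X} {L : X} (hcont : ContinuousOn h s) (hL : L ∈ s)
    (hmem : ∀ n, x n ∈ s) (hrec : ∀ n, x (n + 1) = h (x n)) (hx : Tendsto x atTop (𝓝 L)) :
    IsFixedPt h L := by
  have hx_within : Tendsto x atTop (𝓝[s] L) :=
    tendsto_nhdsWithin_iff.2 ⟨hx, Eventually.of_forall hmem⟩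
  have hshift : Tendsto (fun n => x (n + 1)) atTop (𝓝 (h L)) := by
    simp only [hrec]
    exact (hcont L hL).tendsto.comp hx_within
  exact tendsto_nhds_unique hshift ((tendsto_add_atTop_iff_nat 1).2 hx)

section Recursion

variable {α : Type*} [ConditionallyCompleteLinearOrder α] [TopologicalSpace α] [OrderTopology α]
  {h : α → α} {a b : α} {x : ℕ → α}

theorem le_on_Icc_of_lt_on_Ioc [DenselyOrdered α] (hab : a < b) (hcont : ContinuousOn h (Icc a b))
    (hlt : ∀ y ∈ Ioc a b, h y < y) : ∀ y ∈ Icc a b, h y ≤ y := by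
  intro y hy
  have hy_closure : y ∈ closure (Ioc a b) := (closure_Ioc hab.ne).symm ▸ hy
  exact ((hcont y hy).mono Ioc_subset_Icc_self).closure_le hy_closure continuousWithinAt_id
    fun z hz => (hlt z hz).le

theorem tendsto_left_of_recursion_of_lt_on_Ioc [DenselyOrdered α] (hab : a < b)
    (hcont : ContinuousOn h (Icc a b)) (hmaps : MapsTo h (Icc a b) (Icc a b))
    (hlt : ∀ y ∈ Ioc a b, h y < y) (hx0 : x 0 ∈ Icc a b) (hrec : ∀ n, x (n + 1) = h (x n)) :
    Tendsto x atTop (𝓝 a) := by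
  have hmem := hmaps.recursion_mem hx0 hrec
  have hanti : Antitone x := antitone_nat_of_succ_le fun n =>
    hrec n ▸ le_on_Icc_of_lt_on_Ioc hab hcont hlt (x n) (hmem n)
  have hconv : Tendsto x atTop (𝓝 (⨅ n, x n)) :=
    tendsto_atTop_ciInf hanti ⟨a, forall_mem_range.2 fun n => (hmem n).1⟩
  set L := ⨅ n, x n
  have hL : L ∈ Icc a b := isClosed_Icc.mem_of_tendsto hconv (Eventually.of_forall hmem)
  have hfix : h L = L := hcont.isFixedPt_of_tendsto_recursion hL hmem hrec hconv
  obtain rfl : L = a := by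
    by_contra hne
    exact (hlt L ⟨lt_of_le_of_ne hL.1 (Ne.symm hne), hL.2⟩).ne hfix
  exact hconv

end Recursion

theorem below_BP_threshold_recursion_to_zero_general
    (f : ℝ → ℝ → ℝ) (g : ℝ → ℝ)
    (hf_maps : ∀ x ∈ Icc (0:ℝ) 1, ∀ ε ∈ Icc (0:ℝ) 1, f x ε ∈ Icc (0:ℝ) 1)
    (hf_mono_eps : ∀ x ∈ Icc (0:ℝ) 1, MonotoneOn (fun ε => f x ε) (Icc (0:ℝ) 1))
    (hf_cont : ∀ ε ∈ Icc (0:ℝ) 1, ContinuousOn (fun x => f x ε) (Icc (0:ℝ) 1))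
    (hg_maps : MapsTo g (Icc (0:ℝ) 1) (Icc (0:ℝ) 1))
    (hg_cont : ContinuousOn g (Icc (0:ℝ) 1))
    (ε₀ : ℝ) (hε₀ : ε₀ ∈ Icc (0:ℝ) 1)
    (hε₀lt : ∀ x ∈ Ioc (0:ℝ) 1, f (g x) ε₀ < x) :
    ∀ ε ∈ Icc (0:ℝ) 1,
      ε < sSup {ε' : ℝ | ε' ∈ Icc (0:ℝ) 1 ∧ ∀ x ∈ Ioc (0:ℝ) 1, f (g x) ε' < x} →
      ∀ x : ℕ → ℝ, x 0 = 1 → (∀ i, x (i + 1) = f (g (x i)) ε) →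
        Tendsto x atTop (nhds 0) := by
  intro ε hε hlt x hx0 hrec
  obtain ⟨ε', ⟨hε', hε'lt⟩, hεε'⟩ := exists_lt_of_lt_csSup (by exact ⟨ε₀, hε₀, hε₀lt⟩) hlt
  have hstrict : ∀ y ∈ Ioc (0:ℝ) 1, f (g y) ε < y := fun y hy =>
    (hf_mono_eps (g y) (hg_maps (Ioc_subset_Icc_self hy)) hε hε' hεε'.le).trans_lt (hε'lt y hy)
  have hmaps : MapsTo (fun y => f (g y) ε) (Icc 0 1) (Icc 0 1) := fun y hy =>
    hf_maps _ (hg_maps hy) ε hε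
  have hx0_mem : x 0 ∈ Icc (0:ℝ) 1 := by rw [hx0]; exact right_mem_Icc.2 zero_le_one
  exact tendsto_left_of_recursion_of_lt_on_Ioc zero_lt_one
    ((hf_cont ε hε).comp hg_cont hg_maps) hmaps hstrict hx0_mem hrec

/-- below the BP threshold
`ε^BP = sup{ε ∈ [0,1] : f(g(x),ε) < x for all x ∈ (0,1]}`,
the scalar recursion started at `x⁽⁰⁾ = 1` converges to `0`. -/
theorem below_BP_threshold_recursion_to_zero
    (f : ℝ → ℝ → ℝ) (g : ℝ → ℝ)
    (hf_maps : ∀ x ∈ Icc (0:ℝ) 1, ∀ ε ∈ Icc (0:ℝ) 1, f x ε ∈ Icc (0:ℝ) 1)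
    (hf_mono_eps : ∀ x ∈ Icc (0:ℝ) 1, MonotoneOn (fun ε => f x ε) (Icc (0:ℝ) 1))
    (hf_mono : ∀ ε ∈ Icc (0:ℝ) 1, MonotoneOn (fun x => f x ε) (Icc (0:ℝ) 1))
    (hf_cont : ∀ ε ∈ Icc (0:ℝ) 1, ContinuousOn (fun x => f x ε) (Icc (0:ℝ) 1))
    (hg_maps : MapsTo g (Icc (0:ℝ) 1) (Icc (0:ℝ) 1))
    (hg_mono : MonotoneOn g (Icc (0:ℝ) 1))
    (hg_cont : ContinuousOn g (Icc (0:ℝ) 1))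
    (ε₀ : ℝ) (hε₀ : ε₀ ∈ Icc (0:ℝ) 1)
    (hε₀lt : ∀ x ∈ Ioc (0:ℝ) 1, f (g x) ε₀ < x) :
    ∀ ε ∈ Icc (0:ℝ) 1,
      ε < sSup {ε' : ℝ | ε' ∈ Icc (0:ℝ) 1 ∧ ∀ x ∈ Ioc (0:ℝ) 1, f (g x) ε' < x} →
      ∀ x : ℕ → ℝ, x 0 = 1 → (∀ i, x (i + 1) = f (g (x i)) ε) →
        Tendsto x atTop (nhds 0) :=
  below_BP_threshold_recursion_to_zero_general f g hf_maps hf_mono_eps hf_cont hg_maps hg_cont ε₀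
    hε₀ hε₀lt
end

section
/- Let (f,g) be a scalar admissible system with potential function U and potential threshold ε*. Then for every ε ∈ [0,1] with ε < ε*, there exists m₀ ∈ ℕ such that for every coupling memory m ≥ m₀, every chain length L ∈ ℕ, and every family (x_t)_{t∈ℤ} with x_t ∈ [0,1] for all t, x_t = 0 for all t ∉ {1,…,L}, and x_t = (1/(m+1))·Σ_{k=0}^{m} f( (1/(m+1))·Σ_{j=0}^{m} g(x_{t+j−k}), ε ) for all t ∈ {1,…,L}, one has x_t = 0 for all t ∈ ℤ; that is, the only fixed point of the spatially coupled recursion is x = 0. -/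
open Set intervalIntegral

/-- The minimum unstable fixed point
`u(ε) = sup{ x̃ ∈ [0,1] : f(g(x),ε) < x for all x ∈ (0,x̃) }`. -/
noncomputable def minUnstable (f : ℝ → ℝ → ℝ) (g : ℝ → ℝ) (ε : ℝ) : ℝ :=
  sSup {xt : ℝ | xt ∈ Icc (0:ℝ) 1 ∧ ∀ x ∈ Ioo (0:ℝ) xt, f (g x) ε < x}

/-- The potential threshold
`ε* = sup{ ε ∈ [0,1] : u(ε) > 0 and U(x;ε) > 0 for all x ∈ [u(ε),1] }`. -/
noncomputable def potentialThreshold (f : ℝ → ℝ → ℝ) (g : ℝ → ℝ) : ℝ :=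
  sSup {ε : ℝ | ε ∈ Icc (0:ℝ) 1 ∧ 0 < minUnstable f g ε ∧
    ∀ x ∈ Icc (minUnstable f g ε) 1, 0 < Ufun f g x ε}

/-!
Fix `ε < ε*` and pick `ε'` with `ε < ε'` in the set defining `ε*`. Since `f(·,ε) ≤ f(·,ε')`, we
get `U(·;ε) ≥ U(·;ε') > 0` on `[u(ε'), 1]`, so `U(·;ε) ≥ δ > 0` there by compactness; and every
`y > 0` with `y ≤ f(g(y),ε)` lies in `[u(ε'), 1]`.

Let `x ≠ 0` be a fixed point of the chain `{1, …, L}` and `w = m + 1`. Iterating the coupled map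
from the unit step, with `0` on negative sites and the value at `L` frozen beyond `L`, decreases
to a monotone fixed point `z` dominating `x`, and `y = z L > 0` satisfies `y ≤ f(g(y),ε)`. Shifting
`z` by one site lowers the coupled potential `Φ` by at least `U(y) - 1/w`, since the sums
telescope. On the other hand `Φ` has derivative `∑ ψ'(v) (v - T v) d` along `z + s d`, which is
`O(1/w)` because `z = T z`, `|d| ≤ 1/w` and `∑ |d| ≤ 1`; so the shift changes `Φ` by `O(1/w)`.
Hence `δ ≤ U(y) = O(1/w)`, which fails once `m` is large.
-/

namespace CoupledRecursion

open scoped NNReal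

noncomputable section

/-- In the application `φ` and `ψ` are `f(·,ε)` and `g`, extended from `[0,1]` to `ℝ` by
clamping. -/
structure MonotoneSystem (φ ψ : ℝ → ℝ) : Prop where
  φ_mono : Monotone φ
  ψ_mono : Monotone ψ
  φ_cont : Continuous φ
  ψ_cont : Continuous ψ
  φ_mem : ∀ y, φ y ∈ Icc (0:ℝ) 1
  ψ_mem : ∀ y, ψ y ∈ Icc (0:ℝ) 1
  ψ_zero : ψ 0 = 0

section Average

variable {w : ℕ}

lemma inv_mul_sum_range_mem_Icc {c : ℕ → ℝ} (hc : ∀ j, c j ∈ Icc (0:ℝ) 1) :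
    (w : ℝ)⁻¹ * ∑ j ∈ Finset.range w, c j ∈ Icc (0:ℝ) 1 := by
  rcases Nat.eq_zero_or_pos w with rfl | hw
  · simp
  refine ⟨mul_nonneg (by positivity) (Finset.sum_nonneg fun j _ => (hc j).1), ?_⟩
  calc (w : ℝ)⁻¹ * ∑ j ∈ Finset.range w, c j ≤ (w : ℝ)⁻¹ * ∑ _j ∈ Finset.range w, 1 := by
        gcongr with j; exact (hc j).2
    _ = 1 := by simp [hw.ne']

lemma abs_inv_mul_sum_range_le {c : ℕ → ℝ} {δ : ℝ} (hc : ∀ j, |c j| ≤ δ) :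
    |(w : ℝ)⁻¹ * ∑ j ∈ Finset.range w, c j| ≤ δ := by
  rcases Nat.eq_zero_or_pos w with rfl | hw
  · simpa using (abs_nonneg _).trans (hc 0)
  calc |(w : ℝ)⁻¹ * ∑ j ∈ Finset.range w, c j| ≤ (w : ℝ)⁻¹ * ∑ j ∈ Finset.range w, |c j| := by
        rw [abs_mul, abs_of_pos (by positivity)]; gcongr; exact Finset.abs_sum_le_sum_abs _ _
    _ ≤ (w : ℝ)⁻¹ * ∑ _j ∈ Finset.range w, δ := by gcongr with j; exact hc j
    _ = δ := by simp [hw.ne']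

def fwdAvg (w : ℕ) (a : ℤ → ℝ) (i : ℤ) : ℝ := (w : ℝ)⁻¹ * ∑ j ∈ Finset.range w, a (i + j)

def bwdAvg (w : ℕ) (a : ℤ → ℝ) (i : ℤ) : ℝ := (w : ℝ)⁻¹ * ∑ k ∈ Finset.range w, a (i - k)

variable {a b : ℤ → ℝ}

lemma fwdAvg_mem (ha : ∀ i, a i ∈ Icc (0:ℝ) 1) (i : ℤ) : fwdAvg w a i ∈ Icc (0:ℝ) 1 :=
  inv_mul_sum_range_mem_Icc fun _ => ha _

lemma bwdAvg_mem (ha : ∀ i, a i ∈ Icc (0:ℝ) 1) (i : ℤ) : bwdAvg w a i ∈ Icc (0:ℝ) 1 :=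
  inv_mul_sum_range_mem_Icc fun _ => ha _

lemma fwdAvg_eq_of_forall_eq (hw : w ≠ 0) {i : ℤ} {c : ℝ} (ha : ∀ j < w, a (i + j) = c) :
    fwdAvg w a i = c := by
  rw [fwdAvg, Finset.sum_congr rfl fun j hj => ha j (Finset.mem_range.1 hj)]
  simp [hw]

lemma fwdAvg_sub (i : ℤ) : fwdAvg w a i - fwdAvg w b i = fwdAvg w (fun l => a l - b l) i := by
  simp only [fwdAvg, Finset.sum_sub_distrib, mul_sub]

lemma bwdAvg_sub_bwdAvg_sub_one (t : ℤ) :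
    bwdAvg w a t - bwdAvg w a (t - 1) = (w : ℝ)⁻¹ * (a t - a (t - w)) := by
  have h := (Finset.sum_range_succ' (fun k => a (t - k)) w).symm.trans
    (Finset.sum_range_succ (fun k => a (t - k)) w)
  simp only [Nat.cast_add, Nat.cast_one, Nat.cast_zero, sub_zero] at h
  simp only [bwdAvg, ← mul_sub, sub_sub, add_comm (1 : ℤ)]
  congr 1
  linarith

end Average

section CoupledMap

/-- With `w = m + 1`, the right-hand side of the spatially coupled recursion. -/
def coupledMap (φ ψ : ℝ → ℝ) (w : ℕ) (z : ℤ → ℝ) : ℤ → ℝ :=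
  bwdAvg w fun i => φ (fwdAvg w (fun l => ψ (z l)) i)

variable {φ ψ : ℝ → ℝ} {w : ℕ} {z : ℤ → ℝ}

lemma coupledMap_mem (hs : MonotoneSystem φ ψ) (z : ℤ → ℝ) (t : ℤ) :
    coupledMap φ ψ w z t ∈ Icc (0:ℝ) 1 :=
  bwdAvg_mem (fun _ => hs.φ_mem _) t

lemma coupledMap_mono (hs : MonotoneSystem φ ψ) : Monotone (coupledMap φ ψ w) := by
  intro z v hzv t
  simp only [coupledMap, bwdAvg, fwdAvg]
  gcongr with k
  exact hs.φ_mono (by gcongr with j; exact hs.ψ_mono (hzv _))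

lemma monotone_coupledMap (hs : MonotoneSystem φ ψ) (hz : Monotone z) :
    Monotone (coupledMap φ ψ w z) := by
  intro t t' htt'
  simp only [coupledMap, bwdAvg, fwdAvg]
  gcongr with k
  exact hs.φ_mono (by gcongr with j; exact hs.ψ_mono (hz (by omega)))

lemma coupledMap_comp_add (z : ℤ → ℝ) (c t : ℤ) :
    coupledMap φ ψ w (fun i => z (i + c)) t = coupledMap φ ψ w z (t + c) := by
  simp only [coupledMap, bwdAvg, fwdAvg]
  congr! 5 with k _ j _
  congr 2
  ring

lemma coupledMap_sub_coupledMap_sub_one_le (hs : MonotoneSystem φ ψ) (z : ℤ → ℝ) (t : ℤ) :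
    coupledMap φ ψ w z t - coupledMap φ ψ w z (t - 1) ≤ (w : ℝ)⁻¹ := by
  rw [coupledMap, bwdAvg_sub_bwdAvg_sub_one]
  have hhi := (hs.φ_mem (fwdAvg w (fun l => ψ (z l)) t)).2
  have hlo := (hs.φ_mem (fwdAvg w (fun l => ψ (z l)) (t - w))).1
  nlinarith [inv_nonneg.2 (Nat.cast_nonneg (α := ℝ) w)]

end CoupledMap

section Pinned

def unitStep (i : ℤ) : ℝ := if i < 0 then 0 else 1

variable (φ ψ : ℝ → ℝ) (w N : ℕ)

def pinnedMap (z : ℤ → ℝ) (i : ℤ) : ℝ := if i < 0 then 0 else coupledMap φ ψ w z (min i N)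

def pinnedFixedPoint : ℤ → ℝ := ⨅ n, (pinnedMap φ ψ w N)^[n] unitStep

variable {φ ψ w N} {z x : ℤ → ℝ}

lemma pinnedMap_mem (hs : MonotoneSystem φ ψ) (z : ℤ → ℝ) (i : ℤ) :
    pinnedMap φ ψ w N z i ∈ Icc (0:ℝ) 1 := by
  unfold pinnedMap
  split_ifs
  · simp
  · exact coupledMap_mem hs z _

lemma pinnedMap_le (hs : MonotoneSystem φ ψ) (z : ℤ → ℝ) : pinnedMap φ ψ w N z ≤ unitStep := by
  intro i
  simp only [pinnedMap, unitStep]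
  split_ifs
  · rfl
  · exact (coupledMap_mem hs z _).2

lemma pinnedMap_mono (hs : MonotoneSystem φ ψ) : Monotone (pinnedMap φ ψ w N) := by
  intro z v hzv i
  simp only [pinnedMap]
  split_ifs
  · rfl
  · exact coupledMap_mono hs hzv _

lemma monotone_pinnedMap (hs : MonotoneSystem φ ψ) (hz : Monotone z) :
    Monotone (pinnedMap φ ψ w N z) := by
  intro i i' hii'
  simp only [pinnedMap]
  split_ifs
  · rfl
  · exact (coupledMap_mem hs z _).1
  · omega
  · exact monotone_coupledMap hs hz (min_le_min_right _ hii')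

lemma continuous_pinnedMap (hs : MonotoneSystem φ ψ) : Continuous (pinnedMap φ ψ w N) := by
  have := hs.φ_cont
  have := hs.ψ_cont
  refine continuous_pi fun i => ?_
  by_cases hi : i < 0
  · simp only [pinnedMap, hi, if_true, continuous_const]
  · simp only [pinnedMap, hi, if_false, coupledMap, bwdAvg, fwdAvg]
    fun_prop

lemma tendsto_iterate_pinnedMap (hs : MonotoneSystem φ ψ) :
    Filter.Tendsto (fun n => (pinnedMap φ ψ w N)^[n] unitStep)
      Filter.atTop (nhds (pinnedFixedPoint φ ψ w N)) := by
  refine tendsto_atTop_ciInf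
    ((pinnedMap_mono hs).antitone_iterate_of_map_le (pinnedMap_le hs _)) ⟨0, ?_⟩
  rintro _ ⟨n, rfl⟩ i
  cases n with
  | zero => simp only [Function.iterate_zero, id, unitStep]; split_ifs <;> norm_num
  | succ n =>
    dsimp only
    rw [Function.iterate_succ_apply']
    exact (pinnedMap_mem hs _ i).1

lemma isFixedPt_pinnedFixedPoint (hs : MonotoneSystem φ ψ) :
    Function.IsFixedPt (pinnedMap φ ψ w N) (pinnedFixedPoint φ ψ w N) :=
  isFixedPt_of_tendsto_iterate (tendsto_iterate_pinnedMap hs) (continuous_pinnedMap hs).continuousAt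

lemma monotone_pinnedFixedPoint (hs : MonotoneSystem φ ψ) :
    Monotone (pinnedFixedPoint φ ψ w N) := by
  have hmono : ∀ n, Monotone ((pinnedMap φ ψ w N)^[n] unitStep) := by
    intro n
    induction n with
    | zero =>
      intro i i' hii'
      simp only [Function.iterate_zero, id, unitStep]
      split_ifs <;> first | omega | norm_num
    | succ n ih => rw [Function.iterate_succ_apply']; exact monotone_pinnedMap hs ih
  intro i i' hii'
  have h := tendsto_pi_nhds.1 (tendsto_iterate_pinnedMap (w := w) (N := N) hs)
  exact le_of_tendsto_of_tendsto' (h i) (h i') fun n => hmono n hii'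

lemma le_pinnedFixedPoint (hs : MonotoneSystem φ ψ) (hx : x ≤ unitStep)
    (hxfix : x ≤ pinnedMap φ ψ w N x) : x ≤ pinnedFixedPoint φ ψ w N := by
  have hle : ∀ n, x ≤ (pinnedMap φ ψ w N)^[n] unitStep := by
    intro n
    induction n with
    | zero => exact hx
    | succ n ih =>
      rw [Function.iterate_succ_apply']
      exact hxfix.trans (pinnedMap_mono hs ih)
  intro i
  exact ge_of_tendsto' (tendsto_pi_nhds.1 (tendsto_iterate_pinnedMap hs) i) fun n => hle n i

lemma mem_Icc_of_isFixedPt (hs : MonotoneSystem φ ψ)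
    (hz : Function.IsFixedPt (pinnedMap φ ψ w N) z) (i : ℤ) : z i ∈ Icc (0:ℝ) 1 :=
  congrFun hz i ▸ pinnedMap_mem hs z i

lemma eq_zero_of_isFixedPt (hz : Function.IsFixedPt (pinnedMap φ ψ w N) z) {i : ℤ}
    (hi : i < 0) : z i = 0 := by
  rw [← congrFun hz i, pinnedMap, if_pos hi]

lemma coupledMap_eq_of_isFixedPt (hz : Function.IsFixedPt (pinnedMap φ ψ w N) z) {i : ℤ}
    (h0 : 0 ≤ i) (hN : i ≤ N) : coupledMap φ ψ w z i = z i := by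
  rw [← congrFun hz i, pinnedMap, if_neg (not_lt.2 h0), min_eq_left hN]

lemma eq_apply_of_isFixedPt (hz : Function.IsFixedPt (pinnedMap φ ψ w N) z) {i : ℤ}
    (hi : N ≤ i) : z i = z N := by
  rw [← congrFun hz i, ← congrFun hz N, pinnedMap, pinnedMap, if_neg (by omega),
    if_neg (by omega), min_eq_right hi, min_self]

lemma apply_le_of_isFixedPt (hz : Function.IsFixedPt (pinnedMap φ ψ w N) z) (hmono : Monotone z)
    (i : ℤ) : z i ≤ z N := by
  rcases le_total i N with h | h
  · exact hmono h
  · exact (eq_apply_of_isFixedPt hz h).le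

lemma apply_le_comp_of_isFixedPt (hs : MonotoneSystem φ ψ) (hw : w ≠ 0)
    (hz : Function.IsFixedPt (pinnedMap φ ψ w N) z) (hmono : Monotone z) :
    z N ≤ φ (ψ (z N)) := by
  calc z N = coupledMap φ ψ w z N := (coupledMap_eq_of_isFixedPt hz (by omega) le_rfl).symm
    _ ≤ coupledMap φ ψ w (fun _ => z N) N :=
      coupledMap_mono hs (apply_le_of_isFixedPt hz hmono) _
    _ = φ (ψ (z N)) := by simp [coupledMap, bwdAvg, fwdAvg, hw]

lemma shift_le_pinnedFixedPoint (hs : MonotoneSystem φ ψ) (hx : ∀ t, x t ∈ Icc (0:ℝ) 1)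
    (hxsupp : ∀ t, t ∉ Icc (1:ℤ) N → x t = 0)
    (hxfix : ∀ t ∈ Icc (1:ℤ) N, coupledMap φ ψ w x t = x t) :
    (fun i => x (i + 1)) ≤ pinnedFixedPoint φ ψ w N := by
  refine le_pinnedFixedPoint hs (fun i => ?_) (fun i => ?_)
  · simp only [unitStep]
    split_ifs with hi
    · rw [hxsupp _ (by simp only [mem_Icc]; omega)]
    · exact (hx _).2
  · simp only [pinnedMap, coupledMap_comp_add]
    split_ifs with hi
    · rw [hxsupp _ (by simp only [mem_Icc]; omega)]
    · by_cases hiN : i < N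
      · rw [min_eq_left hiN.le, hxfix _ (by simp only [mem_Icc]; omega)]
      · rw [hxsupp _ (by simp only [mem_Icc]; omega)]
        exact (coupledMap_mem hs x _).1

end Pinned

section Potential

variable (φ ψ : ℝ → ℝ) (w N : ℕ)

def potential (y : ℝ) : ℝ := y * ψ y - (∫ t in (0:ℝ)..y, ψ t) - ∫ t in (0:ℝ)..ψ y, φ t

def coupledPotential (z : ℤ → ℝ) : ℝ :=
  ∑ i ∈ Finset.Icc (0:ℤ) N, (z i * ψ (z i) - ∫ t in (0:ℝ)..z i, ψ t) -
    ∑ i ∈ Finset.Icc (1 - w : ℤ) N, ∫ t in (0:ℝ)..fwdAvg w (fun l => ψ (z l)) i, φ t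

variable {φ ψ w N}

lemma sum_Icc_sub_one_add {M : Type*} [AddCommMonoid M] (F : ℤ → M) {a b : ℤ} (h : a ≤ b + 1) :
    ∑ i ∈ Finset.Icc a b, F (i - 1) + F b = F (a - 1) + ∑ i ∈ Finset.Icc a b, F i := by
  have hshift : ∑ i ∈ Finset.Icc a b, F (i - 1) = ∑ i ∈ Finset.Icc (a - 1) (b - 1), F i := by
    simp only [sub_eq_add_neg]
    rw [← Finset.image_add_right_Icc a b (-1), Finset.sum_image fun _ _ _ _ => add_right_cancel]
  rw [hshift, add_comm, ← Finset.sum_insert (by simp),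
    Finset.insert_Icc_sub_one_right_eq_Icc (by omega),
    ← Finset.insert_Icc_add_one_left_eq_Icc (by omega), sub_add_cancel,
    Finset.sum_insert (by simp)]

lemma sum_mul_fwdAvg_eq_sum_mul_bwdAvg (F c : ℤ → ℝ) {a b : ℤ}
    (hc : ∀ l, l ∉ Icc a b → c l = 0) :
    ∑ i ∈ Finset.Icc (a + 1 - w) b, F i * fwdAvg w c i =
      ∑ l ∈ Finset.Icc a b, c l * bwdAvg w F l := by
  simp only [fwdAvg, bwdAvg, Finset.mul_sum, ← Finset.sum_product']
  refine Finset.sum_bij_ne_zero (fun p _ _ => (p.1 + p.2, p.2)) ?_ ?_ ?_ ?_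
  · rintro ⟨i, j⟩ hp hne
    simp only [Finset.mem_product, Finset.mem_Icc, Finset.mem_range] at hp ⊢
    have : i + j ∈ Icc a b := by_contra fun h => hne (by rw [hc _ h]; ring)
    exact ⟨this, hp.2⟩
  · rintro ⟨i, j⟩ - - ⟨i', j'⟩ - - h
    simp only [Prod.mk.injEq] at h
    ext <;> simp only [] <;> omega
  · rintro ⟨l, k⟩ hp hne
    simp only [Finset.mem_product, Finset.mem_Icc, Finset.mem_range] at hp
    refine ⟨(l - k, k), ?_, ?_, by simp⟩
    · simp only [Finset.mem_product, Finset.mem_Icc, Finset.mem_range]; omega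
    · simpa [mul_comm, mul_left_comm] using hne
  · rintro ⟨i, j⟩ - -
    simp only [add_sub_cancel_right]
    ring

lemma sub_mul_le_integral_sub (hφ : Monotone φ) {a b : ℝ} (hab : a ≤ b) :
    (b - a) * φ a ≤ (∫ t in (0:ℝ)..b, φ t) - ∫ t in (0:ℝ)..a, φ t := by
  rw [integral_interval_sub_left (hφ.intervalIntegrable) (hφ.intervalIntegrable),
    ← smul_eq_mul, ← intervalIntegral.integral_const]
  exact integral_mono_on hab intervalIntegrable_const hφ.intervalIntegrable fun t ht => hφ ht.1

end Potential

section ExactSide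

variable {φ ψ : ℝ → ℝ} {w N : ℕ} {z v : ℤ → ℝ}

lemma coupledPotential_comp_sub_one (hs : MonotoneSystem φ ψ) (hw : w ≠ 0)
    (hz0 : ∀ i < 0, z i = 0) (hzN : ∀ i : ℤ, N ≤ i → z i = z N) :
    coupledPotential φ ψ w N (fun i => z (i - 1)) =
      coupledPotential φ ψ w N z - potential φ ψ (z N) := by
  have hY : ∀ i, fwdAvg w (fun l => ψ (z (l - 1))) i = fwdAvg w (fun l => ψ (z l)) (i - 1) := by
    intro i
    simp only [fwdAvg, sub_add_eq_add_sub]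
  have hsite := sum_Icc_sub_one_add (fun i => z i * ψ (z i) - ∫ t in (0:ℝ)..z i, ψ t)
    (a := 0) (b := N) (by omega)
  have hwin := sum_Icc_sub_one_add
    (fun i => ∫ t in (0:ℝ)..fwdAvg w (fun l => ψ (z l)) i, φ t) (a := 1 - w) (b := N) (by omega)
  have hleft : fwdAvg w (fun l => ψ (z l)) (1 - w - 1) = 0 :=
    fwdAvg_eq_of_forall_eq hw fun j hj => by rw [hz0 _ (by omega), hs.ψ_zero]
  have hright : fwdAvg w (fun l => ψ (z l)) N = ψ (z N) :=
    fwdAvg_eq_of_forall_eq hw fun j _ => by rw [hzN _ (by omega)]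
  simp only [hleft, hright, hz0 (0 - 1) (by norm_num), zero_mul, integral_same,
    sub_zero] at hsite hwin
  simp only [coupledPotential, potential, hY]
  linear_combination hsite - hwin

lemma coupledPotential_update_zero_le (hs : MonotoneSystem φ ψ) (hv0 : v 0 = 0) (c : ℝ) :
    coupledPotential φ ψ w N (Function.update v 0 c) ≤
      coupledPotential φ ψ w N v + (c * ψ c - ∫ t in (0:ℝ)..c, ψ t) -
        ψ c * coupledMap φ ψ w v 0 := by
  set v' := Function.update v 0 c
  have hdiff : ∀ l, ψ (v' l) - ψ (v l) = if l = 0 then ψ c else 0 := by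
    intro l
    by_cases hl : l = 0
    · simp [v', hl, hv0, hs.ψ_zero]
    · simp [v', hl]
  have hsite : ∑ i ∈ Finset.Icc (0:ℤ) N, (v' i * ψ (v' i) - ∫ t in (0:ℝ)..v' i, ψ t) =
      ∑ i ∈ Finset.Icc (0:ℤ) N, (v i * ψ (v i) - ∫ t in (0:ℝ)..v i, ψ t) +
        (c * ψ c - ∫ t in (0:ℝ)..c, ψ t) := by
    rw [← sub_eq_iff_eq_add', ← Finset.sum_sub_distrib, Finset.sum_eq_single (0:ℤ)]
    · simp [v', hv0]
    · intro i _ hi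
      simp [v', hi]
    · simp
  have hwin : ψ c * coupledMap φ ψ w v 0 ≤
      ∑ i ∈ Finset.Icc (1 - w : ℤ) N,
        ((∫ t in (0:ℝ)..fwdAvg w (fun l => ψ (v' l)) i, φ t) -
          ∫ t in (0:ℝ)..fwdAvg w (fun l => ψ (v l)) i, φ t) := by
    have hswap := sum_mul_fwdAvg_eq_sum_mul_bwdAvg (w := w)
      (fun i => φ (fwdAvg w (fun l => ψ (v l)) i)) (fun l => ψ (v' l) - ψ (v l)) (a := 0) (b := N)
      fun l hl => by rw [hdiff, if_neg (by rintro rfl; simp at hl)]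
    rw [zero_add, Finset.sum_eq_single (s := Finset.Icc 0 (N:ℤ)) (0:ℤ)
      (fun l _ hl => by rw [hdiff, if_neg hl, zero_mul]) (by simp), hdiff, if_pos rfl] at hswap
    rw [coupledMap, ← hswap]
    refine Finset.sum_le_sum fun i _ => ?_
    rw [mul_comm, ← fwdAvg_sub]
    refine sub_mul_le_integral_sub hs.φ_mono (sub_nonneg.1 ?_)
    rw [fwdAvg_sub]
    refine (fwdAvg_mem (fun l => ?_) i).1
    rw [hdiff]
    split_ifs
    · exact hs.ψ_mem c
    · simp
  simp only [coupledPotential, hsite, Finset.sum_sub_distrib] at hwin ⊢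
  linarith

end ExactSide

section PinnedShift

variable {φ ψ : ℝ → ℝ} {w N : ℕ} {z : ℤ → ℝ}

def pinnedShift (z : ℤ → ℝ) : ℤ → ℝ := Function.update (fun i => z (i - 1)) 0 (z 0)

lemma pinnedShift_apply (z : ℤ → ℝ) (i : ℤ) :
    pinnedShift z i = if i = 0 then z 0 else z (i - 1) :=
  Function.update_apply _ _ _ _

lemma abs_pinnedShift_sub_le (hmono : Monotone z) (i : ℤ) :
    |pinnedShift z i - z i| ≤ z i - z (i - 1) := by
  rw [pinnedShift_apply]
  split_ifs with h
  · simpa [h] using hmono (by omega : (0:ℤ) - 1 ≤ 0)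
  · rw [abs_sub_comm, abs_of_nonneg (sub_nonneg.2 (hmono (by omega)))]

lemma sub_apply_sub_one_le_of_isFixedPt (hs : MonotoneSystem φ ψ)
    (hz : Function.IsFixedPt (pinnedMap φ ψ w N) z) {i : ℤ} (hi : 1 ≤ i) :
    z i - z (i - 1) ≤ (w : ℝ)⁻¹ := by
  by_cases hiN : i ≤ N
  · rw [← coupledMap_eq_of_isFixedPt hz (by omega) hiN,
      ← coupledMap_eq_of_isFixedPt hz (by omega) (by omega)]
    exact coupledMap_sub_coupledMap_sub_one_le hs z i
  · rw [eq_apply_of_isFixedPt hz (by omega : (N:ℤ) ≤ i),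
      eq_apply_of_isFixedPt hz (by omega : (N:ℤ) ≤ i - 1), sub_self]
    positivity

lemma pinnedShift_eq_of_not_mem (hz : Function.IsFixedPt (pinnedMap φ ψ w N) z) {i : ℤ}
    (hi : i ∉ Icc (0:ℤ) N) : pinnedShift z i = z i := by
  rw [pinnedShift_apply, if_neg (by rintro rfl; simp at hi)]
  rcases lt_or_ge i 0 with h | h
  · rw [eq_zero_of_isFixedPt hz h, eq_zero_of_isFixedPt hz (by omega)]
  · have : (N:ℤ) < i := by simp only [mem_Icc, not_and, not_le] at hi; exact hi h
    rw [eq_apply_of_isFixedPt hz (by omega : (N:ℤ) ≤ i),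
      eq_apply_of_isFixedPt hz (by omega : (N:ℤ) ≤ i - 1)]

lemma abs_pinnedShift_sub_le_inv (hs : MonotoneSystem φ ψ)
    (hz : Function.IsFixedPt (pinnedMap φ ψ w N) z) (hmono : Monotone z) (i : ℤ) :
    |pinnedShift z i - z i| ≤ (w : ℝ)⁻¹ := by
  by_cases hi : 1 ≤ i
  · exact (abs_pinnedShift_sub_le hmono i).trans (sub_apply_sub_one_le_of_isFixedPt hs hz hi)
  by_cases h0 : i = 0
  · simp [h0, pinnedShift_apply]
  · rw [pinnedShift_eq_of_not_mem hz (by simp only [mem_Icc]; omega), sub_self, abs_zero]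
    positivity

lemma sum_abs_pinnedShift_sub_le (hs : MonotoneSystem φ ψ)
    (hz : Function.IsFixedPt (pinnedMap φ ψ w N) z) (hmono : Monotone z) :
    ∑ i ∈ Finset.Icc (0:ℤ) N, |pinnedShift z i - z i| ≤ 1 := by
  have htel := sum_Icc_sub_one_add z (a := 0) (b := N) (by omega)
  rw [eq_zero_of_isFixedPt hz (by norm_num : (0:ℤ) - 1 < 0)] at htel
  calc _ ≤ ∑ i ∈ Finset.Icc (0:ℤ) N, (z i - z (i - 1)) :=
        Finset.sum_le_sum fun i _ => abs_pinnedShift_sub_le hmono i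
    _ = z N := by rw [Finset.sum_sub_distrib]; linarith
    _ ≤ 1 := (mem_Icc_of_isFixedPt hs hz N).2

lemma coupledPotential_pinnedShift_le (hs : MonotoneSystem φ ψ) (hw : w ≠ 0)
    (hz : Function.IsFixedPt (pinnedMap φ ψ w N) z) :
    coupledPotential φ ψ w N (pinnedShift z) ≤
      coupledPotential φ ψ w N z - potential φ ψ (z N) + (w : ℝ)⁻¹ := by
  have hupd := coupledPotential_update_zero_le hs (w := w) (N := N) (v := fun i => z (i - 1))
    (eq_zero_of_isFixedPt hz (by norm_num)) (z 0)
  have hshift : coupledMap φ ψ w (fun i => z (i - 1)) 0 = coupledMap φ ψ w z (0 - 1) := by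
    simpa [sub_eq_add_neg] using coupledMap_comp_add (φ := φ) (ψ := ψ) (w := w) z (-1) 0
  rw [coupledPotential_comp_sub_one (z := z) hs hw (fun i hi => eq_zero_of_isFixedPt hz hi)
    (fun i hi => eq_apply_of_isFixedPt hz hi), hshift] at hupd
  have hstep := coupledMap_sub_coupledMap_sub_one_le (w := w) hs z 0
  rw [coupledMap_eq_of_isFixedPt hz le_rfl (by omega)] at hstep
  have hG : 0 ≤ ∫ t in (0:ℝ)..z 0, ψ t :=
    integral_nonneg (mem_Icc_of_isFixedPt hs hz 0).1 fun t _ => (hs.ψ_mem t).1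
  have hψ := hs.ψ_mem (z 0)
  have hw' : 0 ≤ (w : ℝ)⁻¹ := by positivity
  refine hupd.trans ?_
  nlinarith [mul_le_mul_of_nonneg_left hstep hψ.1, mul_le_mul_of_nonneg_right hψ.2 hw']

end PinnedShift

section TaylorSide

variable {φ ψ ψ' : ℝ → ℝ} {w N : ℕ} {z d : ℤ → ℝ} {Lφ Bψ : ℝ≥0}

lemma abs_coupledMap_sub_le {Lψ : ℝ≥0} (hs : MonotoneSystem φ ψ)
    (hφ : LipschitzOnWith Lφ φ (Icc 0 1)) (hψ : LipschitzOnWith Lψ ψ (Icc 0 1)) {v : ℤ → ℝ}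
    (hz : ∀ i, z i ∈ Icc (0:ℝ) 1) (hv : ∀ i, v i ∈ Icc (0:ℝ) 1) {δ : ℝ}
    (hδ : ∀ i, |v i - z i| ≤ δ) (t : ℤ) :
    |coupledMap φ ψ w v t - coupledMap φ ψ w z t| ≤ Lφ * (Lψ * δ) := by
  have hY : ∀ i, |fwdAvg w (fun l => ψ (v l)) i - fwdAvg w (fun l => ψ (z l)) i| ≤ Lψ * δ := by
    intro i
    rw [fwdAvg_sub]
    refine abs_inv_mul_sum_range_le fun j => ?_
    calc |ψ (v (i + j)) - ψ (z (i + j))| ≤ Lψ * |v (i + j) - z (i + j)| := by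
          simpa [Real.dist_eq] using hψ.dist_le_mul _ (hv _) _ (hz _)
      _ ≤ Lψ * δ := by gcongr; exact hδ _
  simp only [coupledMap, bwdAvg, ← mul_sub, ← Finset.sum_sub_distrib]
  refine abs_inv_mul_sum_range_le fun k => ?_
  calc _ ≤ Lφ * |fwdAvg w (fun l => ψ (v l)) (t - k) - fwdAvg w (fun l => ψ (z l)) (t - k)| := by
        simpa [Real.dist_eq] using
          hφ.dist_le_mul _ (fwdAvg_mem (fun _ => hs.ψ_mem _) _) _
            (fwdAvg_mem (fun _ => hs.ψ_mem _) _)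
    _ ≤ Lφ * (Lψ * δ) := by gcongr; exact hY _

lemma abs_sub_coupledMap_le {Lψ : ℝ≥0} (hs : MonotoneSystem φ ψ)
    (hφ : LipschitzOnWith Lφ φ (Icc 0 1)) (hψ : LipschitzOnWith Lψ ψ (Icc 0 1)) {v : ℤ → ℝ}
    (hz : ∀ i, z i ∈ Icc (0:ℝ) 1) (hv : ∀ i, v i ∈ Icc (0:ℝ) 1) {δ : ℝ}
    (hδ : ∀ i, |v i - z i| ≤ δ) {l : ℤ} (hfix : coupledMap φ ψ w z l = z l) :
    |v l - coupledMap φ ψ w v l| ≤ (1 + Lφ * Lψ) * δ := by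
  calc |v l - coupledMap φ ψ w v l|
        = |(v l - z l) - (coupledMap φ ψ w v l - coupledMap φ ψ w z l)| := by rw [hfix]; ring_nf
    _ ≤ δ + Lφ * (Lψ * δ) :=
        (abs_sub _ _).trans (add_le_add (hδ l) (abs_coupledMap_sub_le hs hφ hψ hz hv hδ l))
    _ = (1 + Lφ * Lψ) * δ := by ring

lemma hasDerivWithinAt_coupledPotential (hs : MonotoneSystem φ ψ)
    (hψ' : ∀ y ∈ Icc (0:ℝ) 1, HasDerivWithinAt ψ (ψ' y) (Icc 0 1) y)
    (hd : ∀ i, i ∉ Icc (0:ℤ) N → d i = 0)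
    (hv : ∀ s ∈ Icc (0:ℝ) 1, ∀ i, z i + s * d i ∈ Icc (0:ℝ) 1) {s : ℝ} (hs₁ : s ∈ Icc (0:ℝ) 1) :
    HasDerivWithinAt (fun s => coupledPotential φ ψ w N fun i => z i + s * d i)
      (∑ l ∈ Finset.Icc (0:ℤ) N, ψ' (z l + s * d l) * d l *
        (z l + s * d l - coupledMap φ ψ w (fun i => z i + s * d i) l)) (Icc 0 1) s := by
  have hline : ∀ i, HasDerivWithinAt (fun s => z i + s * d i) (d i) (Icc 0 1) s := fun i => by
    simpa using (((hasDerivAt_id s).mul_const (d i)).const_add (z i)).hasDerivWithinAt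
  have hψv : ∀ i, HasDerivWithinAt (fun s => ψ (z i + s * d i)) (ψ' (z i + s * d i) * d i)
      (Icc 0 1) s := fun i =>
    (hψ' _ (hv s hs₁ i)).comp s (hline i) fun s' hs' => hv s' hs' i
  have hprim : ∀ h : ℝ → ℝ, Continuous h → ∀ y,
      HasDerivAt (fun y => ∫ t in (0:ℝ)..y, h t) (h y) y := fun h hc y =>
    (hc.integral_hasStrictDerivAt 0 y).hasDerivAt
  have hsite : ∀ i, HasDerivWithinAt
      (fun s => (z i + s * d i) * ψ (z i + s * d i) - ∫ t in (0:ℝ)..z i + s * d i, ψ t)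
      ((z i + s * d i) * (ψ' (z i + s * d i) * d i)) (Icc 0 1) s := fun i =>
    (((hline i).mul (hψv i)).sub
      ((hprim ψ hs.ψ_cont _).comp_hasDerivWithinAt s (hline i))).congr_deriv (by ring)
  have hwin : ∀ i, HasDerivWithinAt
      (fun s => ∫ t in (0:ℝ)..fwdAvg w (fun l => ψ (z l + s * d l)) i, φ t)
      (φ (fwdAvg w (fun l => ψ (z l + s * d l)) i) *
        fwdAvg w (fun l => ψ' (z l + s * d l) * d l) i) (Icc 0 1) s := fun i =>
    (hprim φ hs.φ_cont _).comp_hasDerivWithinAt s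
      ((HasDerivWithinAt.fun_sum (u := Finset.range w) fun j _ => hψv (i + j)).const_mul _)
  refine ((HasDerivWithinAt.fun_sum fun i _ => hsite i).sub
    (HasDerivWithinAt.fun_sum fun i _ => hwin i)).congr_deriv ?_
  have hswap := sum_mul_fwdAvg_eq_sum_mul_bwdAvg (w := w)
    (fun i => φ (fwdAvg w (fun l => ψ (z l + s * d l)) i))
    (fun l => ψ' (z l + s * d l) * d l) (a := 0) (b := N) fun l hl => by rw [hd l hl, mul_zero]
  rw [zero_add] at hswap
  rw [hswap, coupledMap, ← Finset.sum_sub_distrib]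
  exact Finset.sum_congr rfl fun l _ => by ring

lemma abs_coupledPotential_add_sub_le (hs : MonotoneSystem φ ψ)
    (hψ' : ∀ y ∈ Icc (0:ℝ) 1, HasDerivWithinAt ψ (ψ' y) (Icc 0 1) y)
    (hψ'B : ∀ y ∈ Icc (0:ℝ) 1, ‖ψ' y‖₊ ≤ Bψ) (hφ : LipschitzOnWith Lφ φ (Icc 0 1))
    (hzfix : ∀ i ∈ Icc (0:ℤ) N, coupledMap φ ψ w z i = z i)
    (hd : ∀ i, i ∉ Icc (0:ℤ) N → d i = 0)
    (hv : ∀ s ∈ Icc (0:ℝ) 1, ∀ i, z i + s * d i ∈ Icc (0:ℝ) 1) {δ : ℝ} (hdδ : ∀ i, |d i| ≤ δ)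
    (hd1 : ∑ i ∈ Finset.Icc (0:ℤ) N, |d i| ≤ 1) :
    |(coupledPotential φ ψ w N fun i => z i + d i) - coupledPotential φ ψ w N z| ≤
      Bψ * ((1 + Lφ * Bψ) * δ) := by
  have hψL : LipschitzOnWith Bψ ψ (Icc 0 1) :=
    (convex_Icc 0 1).lipschitzOnWith_of_nnnorm_hasDerivWithin_le hψ' hψ'B
  have hz : ∀ i, z i ∈ Icc (0:ℝ) 1 := by simpa using hv 0 (left_mem_Icc.2 zero_le_one)
  have hderiv_le : ∀ s ∈ Icc (0:ℝ) 1, ‖∑ l ∈ Finset.Icc (0:ℤ) N, ψ' (z l + s * d l) * d l *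
      (z l + s * d l - coupledMap φ ψ w (fun i => z i + s * d i) l)‖ ≤
        Bψ * ((1 + Lφ * Bψ) * δ) := by
    intro s hs₁
    have hclose : ∀ i, |(z i + s * d i) - z i| ≤ δ := fun i => by
      rw [add_sub_cancel_left, abs_mul, abs_of_nonneg hs₁.1]
      exact (mul_le_of_le_one_left (abs_nonneg _) hs₁.2).trans (hdδ i)
    have hterm : ∀ l ∈ Finset.Icc (0:ℤ) N, |ψ' (z l + s * d l) * d l *
        (z l + s * d l - coupledMap φ ψ w (fun i => z i + s * d i) l)| ≤
          Bψ * ((1 + Lφ * Bψ) * δ) * |d l| := by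
      intro l hl
      have hψ'l : |ψ' (z l + s * d l)| ≤ Bψ := by
        simpa [← NNReal.coe_le_coe] using hψ'B _ (hv s hs₁ l)
      have hgap := abs_sub_coupledMap_le hs hφ hψL hz (hv s hs₁) hclose
        (hzfix l (by simpa using hl))
      rw [abs_mul, abs_mul, mul_right_comm]
      gcongr
    rw [Real.norm_eq_abs]
    calc _ ≤ ∑ l ∈ Finset.Icc (0:ℤ) N, Bψ * ((1 + Lφ * Bψ) * δ) * |d l| :=
          (Finset.abs_sum_le_sum_abs _ _).trans (Finset.sum_le_sum hterm)
      _ ≤ Bψ * ((1 + Lφ * Bψ) * δ) := by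
          rw [← Finset.mul_sum]
          have : 0 ≤ δ := (abs_nonneg _).trans (hdδ 0)
          exact mul_le_of_le_one_right (by positivity) hd1
  have hmvt := (convex_Icc (0:ℝ) 1).norm_image_sub_le_of_norm_hasDerivWithin_le
    (fun s hs₁ => hasDerivWithinAt_coupledPotential (w := w) hs hψ' hd hv hs₁) hderiv_le
    (left_mem_Icc.2 zero_le_one) (right_mem_Icc.2 zero_le_one)
  simpa using hmvt

lemma abs_coupledPotential_pinnedShift_sub_le (hs : MonotoneSystem φ ψ)
    (hψ' : ∀ y ∈ Icc (0:ℝ) 1, HasDerivWithinAt ψ (ψ' y) (Icc 0 1) y)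
    (hψ'B : ∀ y ∈ Icc (0:ℝ) 1, ‖ψ' y‖₊ ≤ Bψ) (hφ : LipschitzOnWith Lφ φ (Icc 0 1))
    (hz : Function.IsFixedPt (pinnedMap φ ψ w N) z) (hmono : Monotone z) :
    |coupledPotential φ ψ w N (pinnedShift z) - coupledPotential φ ψ w N z| ≤
      Bψ * ((1 + Lφ * Bψ) * (w : ℝ)⁻¹) := by
  have hz01 := mem_Icc_of_isFixedPt hs hz
  have hS01 : ∀ i, pinnedShift z i ∈ Icc (0:ℝ) 1 := fun i => by
    rw [pinnedShift_apply]; split_ifs <;> exact hz01 _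
  simpa using abs_coupledPotential_add_sub_le (d := fun i => pinnedShift z i - z i) hs hψ' hψ'B hφ
    (fun i hi => coupledMap_eq_of_isFixedPt hz hi.1 hi.2)
    (fun i hi => sub_eq_zero.2 (pinnedShift_eq_of_not_mem hz hi))
    (fun s hs₁ i => by simpa using (convex_Icc (0:ℝ) 1).add_smul_sub_mem (hz01 i) (hS01 i) hs₁)
    (abs_pinnedShift_sub_le_inv hs hz hmono) (sum_abs_pinnedShift_sub_le hs hz hmono)

end TaylorSide

section Saturation

variable {φ ψ ψ' : ℝ → ℝ} {w N : ℕ} {x : ℤ → ℝ} {Lφ Bψ : ℝ≥0}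

theorem exists_potential_le_of_coupledMap_eq (hs : MonotoneSystem φ ψ)
    (hψ' : ∀ y ∈ Icc (0:ℝ) 1, HasDerivWithinAt ψ (ψ' y) (Icc 0 1) y)
    (hψ'B : ∀ y ∈ Icc (0:ℝ) 1, ‖ψ' y‖₊ ≤ Bψ) (hφ : LipschitzOnWith Lφ φ (Icc 0 1)) (hw : w ≠ 0)
    (hx : ∀ t, x t ∈ Icc (0:ℝ) 1) (hxsupp : ∀ t, t ∉ Icc (1:ℤ) N → x t = 0)
    (hxfix : ∀ t ∈ Icc (1:ℤ) N, coupledMap φ ψ w x t = x t) :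
    ∃ y ∈ Icc (0:ℝ) 1, (∀ t, x t ≤ y) ∧ y ≤ φ (ψ y) ∧
      potential φ ψ y ≤ (1 + Bψ * (1 + Lφ * Bψ)) * (w : ℝ)⁻¹ := by
  set z := pinnedFixedPoint φ ψ w N
  have hz : Function.IsFixedPt (pinnedMap φ ψ w N) z := isFixedPt_pinnedFixedPoint hs
  have hmono : Monotone z := monotone_pinnedFixedPoint hs
  refine ⟨z N, mem_Icc_of_isFixedPt hs hz N, fun t => ?_,
    apply_le_comp_of_isFixedPt hs hw hz hmono, ?_⟩
  · have hdom := shift_le_pinnedFixedPoint hs hx hxsupp hxfix (t - 1)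
    simp only [sub_add_cancel] at hdom
    exact hdom.trans (apply_le_of_isFixedPt hz hmono _)
  · have hexact := coupledPotential_pinnedShift_le hs hw hz
    have htaylor := abs_le.1 (abs_coupledPotential_pinnedShift_sub_le hs hψ' hψ'B hφ hz hmono)
    linarith [htaylor.1]

end Saturation

end

section Admissible

variable {f : ℝ → ℝ → ℝ} {g : ℝ → ℝ} {ε : ℝ}

lemma monotoneOn_Icc_of_strictMonoOn_Ioc {α β : Type*} [LinearOrder α] [Preorder β]
    {h : α → β} {a b : α} (hs : StrictMonoOn h (Ioc a b)) (ha : ∀ y ∈ Icc a b, h a ≤ h y) :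
    MonotoneOn h (Icc a b) := by
  intro x hx y hy hxy
  rcases hx.1.eq_or_lt with rfl | hax
  · exact ha y hy
  rcases hxy.eq_or_lt with rfl | hxy
  · exact le_rfl
  · exact (hs ⟨hax, hx.2⟩ ⟨hax.trans hxy, hy.2⟩ hxy).le

lemma exists_extension_of_monotoneOn {h : ℝ → ℝ} (hmono : MonotoneOn h (Icc 0 1))
    (hcont : ContinuousOn h (Icc 0 1)) (hmaps : MapsTo h (Icc 0 1) (Icc 0 1)) :
    ∃ h' : ℝ → ℝ, Monotone h' ∧ Continuous h' ∧ (∀ y, h' y ∈ Icc (0:ℝ) 1) ∧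
      EqOn h' h (Icc 0 1) :=
  ⟨IccExtend zero_le_one ((Icc 0 1).domRestrict h),
    (monotoneOn_iff_monotone.1 hmono).IccExtend _, continuous_IccExtend_iff.2 hcont.domRestrict,
    fun y => hmaps (projIcc 0 1 zero_le_one y).2, fun _ hy => IccExtend_of_mem _ _ hy⟩

lemma contDiffOn_slice (hf : ContDiffOn ℝ 2 (fun p : ℝ × ℝ => f p.1 p.2) (Icc 0 1 ×ˢ Icc 0 1))
    (hε : ε ∈ Icc (0:ℝ) 1) : ContDiffOn ℝ 2 (fun y => f y ε) (Icc 0 1) :=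
  hf.comp (contDiffOn_id.prodMk contDiffOn_const) fun _ hy => ⟨hy, hε⟩

lemma minUnstable_le {y : ℝ} (hy : 0 < y) (hfix : y ≤ f (g y) ε) : minUnstable f g ε ≤ y := by
  have hne : {xt : ℝ | xt ∈ Icc (0:ℝ) 1 ∧ ∀ x ∈ Ioo (0:ℝ) xt, f (g x) ε < x}.Nonempty :=
    ⟨0, ⟨le_rfl, zero_le_one⟩, fun x hx => (hx.1.trans hx.2).false.elim⟩
  by_contra! h
  obtain ⟨xt, ⟨-, hxt⟩, hyxt⟩ := exists_lt_of_lt_csSup hne h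
  exact (hxt y ⟨hy, hyxt⟩).not_ge hfix

lemma continuousOn_Ufun (hf : ContinuousOn (fun t => f t ε) (Icc 0 1))
    (hg : ContinuousOn g (Icc 0 1)) (hg_maps : MapsTo g (Icc 0 1) (Icc 0 1)) :
    ContinuousOn (fun y => Ufun f g y ε) (Icc 0 1) := by
  have hprim : ∀ {h : ℝ → ℝ}, ContinuousOn h (Icc 0 1) →
      ContinuousOn (fun y => ∫ t in (0:ℝ)..y, h t) (Icc 0 1) := fun hh => by
    simpa using continuousOn_primitive_interval (μ := MeasureTheory.volume) (a := 0) (b := 1)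
      (by simpa using hh.integrableOn_Icc (μ := MeasureTheory.volume))
  exact ((continuousOn_id.mul hg).sub (hprim hg)).sub ((hprim hf).comp hg hg_maps)

lemma Ufun_le_Ufun {ε' y : ℝ} (hf : ContinuousOn (fun t => f t ε) (Icc 0 1))
    (hf' : ContinuousOn (fun t => f t ε') (Icc 0 1)) (hle : ∀ t ∈ Icc (0:ℝ) 1, f t ε ≤ f t ε')
    (hgy : g y ∈ Icc (0:ℝ) 1) : Ufun f g y ε' ≤ Ufun f g y ε := by
  have hsub : uIcc 0 (g y) ⊆ Icc 0 1 := by rw [uIcc_of_le hgy.1]; exact Icc_subset_Icc_right hgy.2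
  have := integral_mono_on hgy.1 ((hf.mono hsub).intervalIntegrable (μ := MeasureTheory.volume))
    ((hf'.mono hsub).intervalIntegrable) fun t ht => hle t ⟨ht.1, ht.2.trans hgy.2⟩
  simp only [Ufun, Ffun]
  linarith

lemma Ufun_eq_potential {φ ψ : ℝ → ℝ} (hφ : EqOn φ (fun t => f t ε) (Icc 0 1))
    (hψ : EqOn ψ g (Icc 0 1)) (hg_maps : MapsTo g (Icc 0 1) (Icc 0 1)) {y : ℝ}
    (hy : y ∈ Icc (0:ℝ) 1) : Ufun f g y ε = potential φ ψ y := by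
  have hsub : ∀ {b}, b ∈ Icc (0:ℝ) 1 → uIcc 0 b ⊆ Icc 0 1 := fun hb => by
    rw [uIcc_of_le hb.1]; exact Icc_subset_Icc_right hb.2
  rw [Ufun, Gfun, Ffun, potential, hψ hy,
    integral_congr ((hψ.mono (hsub hy)).symm), integral_congr ((hφ.mono (hsub (hg_maps hy))).symm)]



lemma monotoneOn_slice (hf_maps : ∀ x ∈ Icc (0:ℝ) 1, ∀ ε ∈ Icc (0:ℝ) 1, f x ε ∈ Icc (0:ℝ) 1)
    (hf_mono_x : ∀ ε ∈ Ioc (0:ℝ) 1, StrictMonoOn (fun x => f x ε) (Ioc (0:ℝ) 1))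
    (hf_zero : ∀ x ∈ Icc (0:ℝ) 1, ∀ ε ∈ Icc (0:ℝ) 1, f 0 ε = 0 ∧ f x 0 = 0)
    (hε : ε ∈ Icc (0:ℝ) 1) : MonotoneOn (fun x => f x ε) (Icc 0 1) := by
  rcases hε.1.eq_or_lt with rfl | hε0
  · intro a ha b hb _
    simp only [(hf_zero a ha 0 hε).2, (hf_zero b hb 0 hε).2, le_rfl]
  · refine monotoneOn_Icc_of_strictMonoOn_Ioc (hf_mono_x ε ⟨hε0, hε.2⟩) fun y hy => ?_
    simpa only [(hf_zero y hy ε hε).1] using (hf_maps y hy ε hε).1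

lemma monotoneOn_param (hf_maps : ∀ x ∈ Icc (0:ℝ) 1, ∀ ε ∈ Icc (0:ℝ) 1, f x ε ∈ Icc (0:ℝ) 1)
    (hf_mono_eps : ∀ x ∈ Ioc (0:ℝ) 1, StrictMonoOn (fun ε => f x ε) (Ioc (0:ℝ) 1))
    (hf_zero : ∀ x ∈ Icc (0:ℝ) 1, ∀ ε ∈ Icc (0:ℝ) 1, f 0 ε = 0 ∧ f x 0 = 0) {t : ℝ}
    (ht : t ∈ Icc (0:ℝ) 1) : MonotoneOn (fun ε => f t ε) (Icc 0 1) := by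
  rcases ht.1.eq_or_lt with rfl | ht0
  · intro a ha b hb _
    simp only [(hf_zero 0 ht a ha).1, (hf_zero 0 ht b hb).1, le_rfl]
  · refine monotoneOn_Icc_of_strictMonoOn_Ioc (hf_mono_eps t ⟨ht0, ht.2⟩) fun e he => ?_
    simpa only [(hf_zero t ht e he).2] using (hf_maps t ht e he).1

lemma coupledMap_eq_of_eqOn {φ ψ φ₀ ψ₀ : ℝ → ℝ} {x : ℤ → ℝ} (hφ : EqOn φ φ₀ (Icc 0 1))
    (hψ : EqOn ψ ψ₀ (Icc 0 1)) (hψmem : ∀ y, ψ y ∈ Icc (0:ℝ) 1) (hx : ∀ t, x t ∈ Icc (0:ℝ) 1)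
    (m : ℕ) (t : ℤ) :
    coupledMap φ ψ (m + 1) x t = (1 / (m + 1 : ℝ)) * ∑ k ∈ Finset.range (m + 1),
      φ₀ ((1 / (m + 1 : ℝ)) * ∑ j ∈ Finset.range (m + 1), ψ₀ (x (t + (j : ℤ) - (k : ℤ)))) := by
  simp only [coupledMap, bwdAvg, fwdAvg, Nat.cast_add, Nat.cast_one, one_div]
  refine congrArg _ (Finset.sum_congr rfl fun k _ => ?_)
  refine (hφ ?_).trans (congrArg φ₀ (congrArg _ (Finset.sum_congr rfl fun j _ => ?_)))
  · exact_mod_cast inv_mul_sum_range_mem_Icc (w := m + 1) fun j => hψmem _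
  · rw [hψ (hx _), sub_add_eq_add_sub]

lemma exists_pos_le_Ufun_of_lt_potentialThreshold
    (hf_maps : ∀ x ∈ Icc (0:ℝ) 1, ∀ ε ∈ Icc (0:ℝ) 1, f x ε ∈ Icc (0:ℝ) 1)
    (hf_mono_eps : ∀ x ∈ Ioc (0:ℝ) 1, StrictMonoOn (fun ε => f x ε) (Ioc (0:ℝ) 1))
    (hf_zero : ∀ x ∈ Icc (0:ℝ) 1, ∀ ε ∈ Icc (0:ℝ) 1, f 0 ε = 0 ∧ f x 0 = 0)
    (hg_maps : MapsTo g (Icc (0:ℝ) 1) (Icc (0:ℝ) 1))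
    (hf_smooth : ContDiffOn ℝ 2 (fun p : ℝ × ℝ => f p.1 p.2) (Icc (0:ℝ) 1 ×ˢ Icc (0:ℝ) 1))
    (hg_smooth : ContDiffOn ℝ 2 g (Icc (0:ℝ) 1)) (hε : ε ∈ Icc (0:ℝ) 1)
    (hlt : ε < potentialThreshold f g) :
    ∃ δ > 0, ∀ y ∈ Icc (0:ℝ) 1, 0 < y → y ≤ f (g y) ε → δ ≤ Ufun f g y ε := by
  have hne : {ε' : ℝ | ε' ∈ Icc (0:ℝ) 1 ∧ 0 < minUnstable f g ε' ∧
      ∀ x ∈ Icc (minUnstable f g ε') 1, 0 < Ufun f g x ε'}.Nonempty := by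
    by_contra h
    rw [not_nonempty_iff_eq_empty] at h
    rw [potentialThreshold, h, Real.sSup_empty] at hlt
    exact hlt.not_ge hε.1
  obtain ⟨ε', ⟨hε', hu, hU⟩, hεε'⟩ := exists_lt_of_lt_csSup hne hlt
  have hslice : ∀ {e}, e ∈ Icc (0:ℝ) 1 → ContinuousOn (fun t => f t e) (Icc 0 1) :=
    fun he => (contDiffOn_slice hf_smooth he).continuousOn
  have hle : ∀ t ∈ Icc (0:ℝ) 1, f t ε ≤ f t ε' := fun t ht =>
    monotoneOn_param hf_maps hf_mono_eps hf_zero ht hε hε' hεε'.le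
  obtain ⟨δ, hδ, hδle⟩ := isCompact_Icc.exists_forall_le'
    ((continuousOn_Ufun (hslice hε) hg_smooth.continuousOn hg_maps).mono
      (Icc_subset_Icc_left hu.le))
    fun y hy => (hU y hy).trans_le
      (Ufun_le_Ufun (hslice hε) (hslice hε') hle (hg_maps ⟨hu.le.trans hy.1, hy.2⟩))
  exact ⟨δ, hδ, fun y hy hy0 hfix =>
    hδle y ⟨minUnstable_le hy0 (hfix.trans (hle _ (hg_maps hy))), hy.2⟩⟩

lemma exists_Ufun_le_of_coupled_fixed_point
    (hf_maps : ∀ x ∈ Icc (0:ℝ) 1, ∀ ε ∈ Icc (0:ℝ) 1, f x ε ∈ Icc (0:ℝ) 1)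
    (hf_mono_x : ∀ ε ∈ Ioc (0:ℝ) 1, StrictMonoOn (fun x => f x ε) (Ioc (0:ℝ) 1))
    (hf_zero : ∀ x ∈ Icc (0:ℝ) 1, ∀ ε ∈ Icc (0:ℝ) 1, f 0 ε = 0 ∧ f x 0 = 0)
    (hg_maps : MapsTo g (Icc (0:ℝ) 1) (Icc (0:ℝ) 1))
    (hg_mono : StrictMonoOn g (Ioc (0:ℝ) 1)) (hg0 : g 0 = 0)
    (hf_smooth : ContDiffOn ℝ 2 (fun p : ℝ × ℝ => f p.1 p.2) (Icc (0:ℝ) 1 ×ˢ Icc (0:ℝ) 1))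
    (hg_smooth : ContDiffOn ℝ 2 g (Icc (0:ℝ) 1)) (hε : ε ∈ Icc (0:ℝ) 1) :
    ∃ C : ℝ, ∀ m N : ℕ, ∀ x : ℤ → ℝ, (∀ t, x t ∈ Icc (0:ℝ) 1) →
      (∀ t : ℤ, t ∉ Icc (1:ℤ) N → x t = 0) →
      (∀ t ∈ Icc (1:ℤ) N, x t = (1 / (m + 1 : ℝ)) * ∑ k ∈ Finset.range (m + 1),
          f ((1 / (m + 1 : ℝ)) * ∑ j ∈ Finset.range (m + 1), g (x (t + (j : ℤ) - (k : ℤ)))) ε) →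
      ∃ y ∈ Icc (0:ℝ) 1, (∀ t, x t ≤ y) ∧ y ≤ f (g y) ε ∧ Ufun f g y ε ≤ C / (m + 1) := by
  obtain ⟨ψ, hψmono, hψcont, hψmem, hψg⟩ := exists_extension_of_monotoneOn
    (monotoneOn_Icc_of_strictMonoOn_Ioc hg_mono fun y hy => by rw [hg0]; exact (hg_maps hy).1)
    hg_smooth.continuousOn hg_maps
  have hfε := contDiffOn_slice hf_smooth hε
  obtain ⟨φ, hφmono, hφcont, hφmem, hφf⟩ := exists_extension_of_monotoneOn
    (monotoneOn_slice hf_maps hf_mono_x hf_zero hε) hfε.continuousOn fun t ht => hf_maps t ht ε hε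
  have hs : MonotoneSystem φ ψ :=
    ⟨hφmono, hψmono, hφcont, hψcont, hφmem, hψmem, by rw [hψg (left_mem_Icc.2 zero_le_one), hg0]⟩
  have hψ' : ∀ y ∈ Icc (0:ℝ) 1, HasDerivWithinAt ψ (derivWithin g (Icc 0 1) y) (Icc 0 1) y :=
    fun y hy => (hg_smooth.differentiableOn (by norm_num) y hy).hasDerivWithinAt.congr hψg (hψg hy)
  obtain ⟨Bψ, hBψ⟩ := (isCompact_Icc.image_of_continuousOn (hg_smooth.continuousOn_derivWithin
    (uniqueDiffOn_Icc zero_lt_one) (by norm_num)).nnnorm).bddAbove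
  obtain ⟨Lφ, hLφ⟩ := hfε.exists_lipschitzOnWith (by norm_num) (convex_Icc 0 1) isCompact_Icc
  refine ⟨1 + Bψ * (1 + Lφ * Bψ), fun m N x hx hxsupp hxfix => ?_⟩
  have hfix : ∀ t ∈ Icc (1:ℤ) N, coupledMap φ ψ (m + 1) x t = x t := fun t ht =>
    (coupledMap_eq_of_eqOn hφf hψg hψmem hx m t).trans (hxfix t ht).symm
  obtain ⟨y, hy, hxy, hyφ, hyU⟩ := exists_potential_le_of_coupledMap_eq hs hψ'
    (fun y hy => hBψ ⟨y, hy, rfl⟩)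
    (fun a ha b hb => by simpa only [hφf ha, hφf hb] using hLφ ha hb)
    (Nat.succ_ne_zero m) hx hxsupp hfix
  refine ⟨y, hy, hxy, hyφ.trans_eq (by rw [hψg hy, hφf (hg_maps hy)]), ?_⟩
  rw [Ufun_eq_potential hφf hψg hg_maps hy]
  convert hyU using 1
  push_cast
  ring

end Admissible

end CoupledRecursion

open CoupledRecursion

/-- threshold saturation for a scalar admissible system `(f,g)`:
for every `ε < ε*` and a large enough coupling memory `m`, the only fixed
point of the spatially coupled recursion is `x = 0`. -/
theorem threshold_saturation_scalar_admissible
    (f : ℝ → ℝ → ℝ) (g : ℝ → ℝ)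
    (hf_maps : ∀ x ∈ Icc (0:ℝ) 1, ∀ ε ∈ Icc (0:ℝ) 1, f x ε ∈ Icc (0:ℝ) 1)
    (hf_mono_x : ∀ ε ∈ Ioc (0:ℝ) 1, StrictMonoOn (fun x => f x ε) (Ioc (0:ℝ) 1))
    (hf_mono_eps : ∀ x ∈ Ioc (0:ℝ) 1, StrictMonoOn (fun ε => f x ε) (Ioc (0:ℝ) 1))
    (hf_zero : ∀ x ∈ Icc (0:ℝ) 1, ∀ ε ∈ Icc (0:ℝ) 1, f 0 ε = 0 ∧ f x 0 = 0)
    (hg_maps : MapsTo g (Icc (0:ℝ) 1) (Icc (0:ℝ) 1))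
    (hg_mono : StrictMonoOn g (Ioc (0:ℝ) 1))
    (hg0 : g 0 = 0)
    (hf_smooth : ContDiffOn ℝ 2 (fun p : ℝ × ℝ => f p.1 p.2)
      (Icc (0:ℝ) 1 ×ˢ Icc (0:ℝ) 1))
    (hg_smooth : ContDiffOn ℝ 2 g (Icc (0:ℝ) 1)) :
    ∀ ε ∈ Icc (0:ℝ) 1, ε < potentialThreshold f g →
      ∃ m₀ : ℕ, ∀ m : ℕ, m₀ ≤ m → ∀ L : ℕ, ∀ x : ℤ → ℝ,
        (∀ t : ℤ, x t ∈ Icc (0:ℝ) 1) →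
        (∀ t : ℤ, t ∉ Icc (1:ℤ) (L:ℤ) → x t = 0) →
        (∀ t ∈ Icc (1:ℤ) (L:ℤ),
          x t = (1 / (m + 1 : ℝ)) * ∑ k ∈ Finset.range (m + 1),
            f ((1 / (m + 1 : ℝ)) * ∑ j ∈ Finset.range (m + 1),
                g (x (t + (j : ℤ) - (k : ℤ)))) ε) →
        ∀ t : ℤ, x t = 0 := by
  intro ε hε hlt
  obtain ⟨δ, hδ, hgap⟩ := exists_pos_le_Ufun_of_lt_potentialThreshold hf_maps hf_mono_eps hf_zero
    hg_maps hf_smooth hg_smooth hε hlt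
  obtain ⟨C, hC⟩ := exists_Ufun_le_of_coupled_fixed_point hf_maps hf_mono_x hf_zero hg_maps
    hg_mono hg0 hf_smooth hg_smooth hε
  refine ⟨⌈C / δ⌉₊, fun m hm L x hx hxsupp hxfix t => ?_⟩
  by_contra hxt
  obtain ⟨y, hy, hxy, hyfix, hyU⟩ := hC m L x hx hxsupp hxfix
  have hδU := hgap y hy (((hx t).1.lt_of_ne' hxt).trans_le (hxy t)) hyfix
  have hm' : C / δ < m + 1 :=
    (Nat.le_ceil _).trans_lt (by exact_mod_cast Nat.lt_succ_of_le hm)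
  rw [div_lt_iff₀ hδ] at hm'
  rw [le_div_iff₀ (by positivity)] at hyU
  nlinarith
end

section
/- Let h : ℝ×ℝ → ℝ map [0,1]×[0,1] into [0,1] and satisfy: h(0,ε) = h(x,0) = 0 for all x, ε ∈ [0,1]; for each fixed second argument in (0,1], h is strictly increasing in its first argument on (0,1]; for each fixed first argument in (0,1], h is strictly increasing in its second argument on (0,1]; and h is twice continuously differentiable on [0,1]×[0,1]. Let ε* be the potential threshold of the scalar admissible system f(x,ε) = h(ε·x,ε), g(x) = x. Then for every ε ∈ [0,1] with ε < ε*, there exists m₀ ∈ ℕ such that for every m ≥ m₀, every L ∈ ℕ, and every family (x_t)_{t∈ℤ} with x_t ∈ [0,1] for all t, x_t = 0 for all t ∉ {1,…,L}, and x_t = (1/(m+1))·Σ_{k=0}^{m} h( (ε/(m+1))·Σ_{j=0}^{m} x_{t−j+k}, ε ) for all t ∈ {1,…,L}, one has x_t = 0 for all t ∈ ℤ; that is, threshold saturation holds for spatially coupled parallel concatenated codes. -/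
open Set intervalIntegral

open scoped BigOperators

/-!
Pick ε' > ε in the set defining `ε*`, let `u = u(ε')` and `f z = h (ε z) ε ≤ h (ε' z) ε'`. Then
`f z < z` on `(0, u)` and, by compactness, the potential `z² / 2 - ∫₀ᶻ f` is at least some `c > 0`
on `[u, 1]`.

Let `x` be a nonzero fixed point of the coupled system with window `m + 1`. Its running maximum `v`
is nondecreasing, vanishes at nonpositive sites, is constant from `L` on, and lies below its image
under the coupled update. For the window averages `y` of `v`, whose increments are at most
`1 / (m + 1)`, the Lipschitz bound `∫_{y_{i-1}}^{y_i} f ≥ f(y_i) Δ_i - K Δ_i² / 2` summed over `i`,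
together with an exchange of the two window averages (summation by parts), gives
`M² / 2 - ∫₀ᴹ f ≤ K / (2 (m + 1))` for the final value `M` of `v`. Since `0 < M ≤ f M`, `M ≥ u`,
so `c ≤ K / (2 (m + 1))`, which fails once `m ≥ K / c`.
-/

theorem Finset.sum_Ioc_sub_pred {M : Type*} [AddCommGroup M] (φ : ℤ → M) {a b : ℤ} (hab : a ≤ b) :
    ∑ i ∈ Ioc a b, (φ i - φ (i - 1)) = φ b - φ a := by
  induction b, hab using Int.leInduction with
  | base => simp
  | succ b hab ih =>
    rw [← insert_Ioc_right_eq_Ioc_add_one hab, sum_insert (by simp), ih, add_sub_cancel_right]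
    abel

theorem Finset.sum_Ioc_mul_shift {R : Type*} [NonUnitalNonAssocSemiring R] {φ e : ℤ → R}
    {a b j : ℤ} (hj : 0 ≤ j) (he : ∀ s ∉ Ioc a (b - j), e s = 0) :
    ∑ i ∈ Ioc a b, φ i * e (i - j) = ∑ s ∈ Ioc a b, φ (s + j) * e s := by
  have hshift : ∑ i ∈ Ioc a b, φ i * e (i - j) = ∑ s ∈ Ioc (a - j) (b - j), φ (s + j) * e s := by
    rw [← sub_add_cancel a j, ← sub_add_cancel b j, ← map_add_right_Ioc, sum_map]
    simp
  have hsupp {T : Finset ℤ} (hT : Ioc a (b - j) ⊆ T) :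
      ∑ s ∈ T, φ (s + j) * e s = ∑ s ∈ Ioc a (b - j), φ (s + j) * e s :=
    (sum_subset hT fun s _ hs => by rw [he s hs, mul_zero]).symm
  rw [hshift, hsupp (T := Ioc (a - j) (b - j)) (Ioc_subset_Ioc (by linarith) le_rfl),
    hsupp (T := Ioc a b) (Ioc_subset_Ioc le_rfl (by linarith))]

theorem intervalIntegral.mul_sub_sub_le_integral_of_lipschitzOnWith {f : ℝ → ℝ} {K : NNReal}
    {a b : ℝ} (hab : a ≤ b) (hf : LipschitzOnWith K f (Icc a b)) :
    f b * (b - a) - K * (b - a) ^ 2 / 2 ≤ ∫ t in a..b, f t := by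
  have hb : b ∈ Icc a b := right_mem_Icc.2 hab
  have hlow : ∀ t ∈ Icc a b, f b - K * (b - t) ≤ f t := by
    intro t ht
    have := (hf.dist_le_mul b hb t ht)
    rw [Real.dist_eq, Real.dist_eq, abs_of_nonneg (sub_nonneg.2 ht.2)] at this
    linarith [le_abs_self (f b - f t)]
  have hint : ∫ t in a..b, (f b - K * (b - t)) = f b * (b - a) - K * (b - a) ^ 2 / 2 := by
    rw [intervalIntegral.integral_sub intervalIntegrable_const
      ((by fun_prop : Continuous _).intervalIntegrable _ _), intervalIntegral.integral_const_mul,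
      intervalIntegral.integral_comp_sub_left (fun t => t)]
    simp only [integral_const, smul_eq_mul, sub_self, integral_id]
    ring
  rw [← hint]
  exact intervalIntegral.integral_mono_on hab ((by fun_prop : Continuous _).intervalIntegrable _ _)
    (hf.continuousOn.intervalIntegrable_of_Icc hab) hlow

theorem monotoneOn_Icc_of_strictMonoOn_Ioc {g : ℝ → ℝ} {a b : ℝ} (hg : StrictMonoOn g (Ioc a b))
    (ha : ∀ x ∈ Icc a b, g a ≤ g x) : MonotoneOn g (Icc a b) := by
  intro x hx y hy hxy
  rcases hx.1.eq_or_lt with rfl | hax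
  · exact ha y hy
  · exact hg.monotoneOn ⟨hax, hx.2⟩ ⟨hax.trans_le hxy, hy.2⟩ hxy

theorem intervalIntegral.integral_le_integral_of_continuousOn {f g : ℝ → ℝ} {a b z : ℝ}
    (hf : ContinuousOn f (Icc a b)) (hg : ContinuousOn g (Icc a b))
    (hfg : ∀ t ∈ Icc a b, f t ≤ g t) (hz : z ∈ Icc a b) :
    ∫ t in a..z, f t ≤ ∫ t in a..z, g t := by
  have hsub : Icc a z ⊆ Icc a b := Icc_subset_Icc le_rfl hz.2
  exact intervalIntegral.integral_mono_on hz.1 ((hf.mono hsub).intervalIntegrable_of_Icc hz.1)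
    ((hg.mono hsub).intervalIntegrable_of_Icc hz.1) fun t ht => hfg t (hsub ht)

noncomputable def slidingAvg (m : ℕ) (v : ℤ → ℝ) (t : ℤ) : ℝ :=
  𝔼 j ∈ Finset.range (m + 1), v (t - j)

noncomputable def coupledStep (f : ℝ → ℝ) (m : ℕ) (v : ℤ → ℝ) (t : ℤ) : ℝ :=
  𝔼 k ∈ Finset.range (m + 1), f (slidingAvg m v (t + k))

section SlidingAvg

variable {m : ℕ} {v w : ℤ → ℝ}

theorem slidingAvg_mem_Icc (hv : ∀ t, v t ∈ Icc 0 1) (t : ℤ) : slidingAvg m v t ∈ Icc 0 1 :=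
  ⟨Finset.expect_nonneg fun _ _ => (hv _).1,
    Finset.expect_le Finset.nonempty_range_add_one fun _ _ => (hv _).2⟩

theorem slidingAvg_le_slidingAvg (h : ∀ t, v t ≤ w t) (t : ℤ) :
    slidingAvg m v t ≤ slidingAvg m w t :=
  Finset.expect_le_expect fun _ _ => h _

theorem Monotone.slidingAvg (hv : Monotone v) : Monotone (slidingAvg m v) :=
  fun _ _ hst => Finset.expect_le_expect fun _ _ => hv (sub_le_sub_right hst _)

theorem slidingAvg_eq_of_forall {t : ℤ} {c : ℝ} (h : ∀ j ≤ m, v (t - j) = c) :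
    slidingAvg m v t = c := by
  rw [slidingAvg,
    Finset.expect_congr rfl fun j hj => h j (Nat.lt_succ_iff.1 (Finset.mem_range.1 hj)),
    Finset.expect_const Finset.nonempty_range_add_one]

theorem slidingAvg_sub_pred (t : ℤ) :
    slidingAvg m v t - slidingAvg m v (t - 1) =
      𝔼 j ∈ Finset.range (m + 1), (v (t - j) - v (t - j - 1)) := by
  rw [slidingAvg, slidingAvg, ← Finset.expect_sub_distrib]
  simp only [sub_right_comm]

theorem slidingAvg_sub_pred_le (hv : ∀ t, v t ∈ Icc 0 1) (t : ℤ) :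
    slidingAvg m v t - slidingAvg m v (t - 1) ≤ (m + 1 : ℝ)⁻¹ := by
  have htel : ∑ j ∈ Finset.range (m + 1), (v (t - j) - v (t - j - 1)) = v t - v (t - (m + 1)) := by
    have := Finset.sum_range_sub' (fun j : ℕ => v (t - j)) (m + 1)
    push_cast at this
    simpa [sub_sub] using this
  rw [slidingAvg_sub_pred, Finset.expect_eq_sum_div_card, htel, Finset.card_range, div_eq_inv_mul]
  push_cast
  refine mul_le_of_le_one_right (by positivity) ?_
  linarith [(hv t).2, (hv (t - (m + 1))).1]

end SlidingAvg

section CoupledStep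

variable {f : ℝ → ℝ} {m : ℕ} {v w : ℤ → ℝ}

theorem coupledStep_nonneg (hf : ∀ z ∈ Icc 0 1, 0 ≤ f z) (hv : ∀ t, v t ∈ Icc 0 1) (t : ℤ) :
    0 ≤ coupledStep f m v t :=
  Finset.expect_nonneg fun _ _ => hf _ (slidingAvg_mem_Icc hv _)

theorem coupledStep_le_coupledStep (hf : MonotoneOn f (Icc 0 1)) (hv : ∀ t, v t ∈ Icc 0 1)
    (hw : ∀ t, w t ∈ Icc 0 1) (hvw : ∀ t, v t ≤ w t) (t : ℤ) :
    coupledStep f m v t ≤ coupledStep f m w t :=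
  Finset.expect_le_expect fun _ _ =>
    hf (slidingAvg_mem_Icc hv _) (slidingAvg_mem_Icc hw _) (slidingAvg_le_slidingAvg hvw _)

theorem Monotone.coupledStep (hf : MonotoneOn f (Icc 0 1)) (hv01 : ∀ t, v t ∈ Icc 0 1)
    (hv : Monotone v) : Monotone (coupledStep f m v) :=
  fun _ _ hst => Finset.expect_le_expect fun _ _ =>
    hf (slidingAvg_mem_Icc hv01 _) (slidingAvg_mem_Icc hv01 _) (hv.slidingAvg (by linarith))

theorem coupledStep_eq_sum (t : ℤ) :
    coupledStep f m v t = 1 / (m + 1 : ℝ) * ∑ k ∈ Finset.range (m + 1),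
      f (1 / (m + 1 : ℝ) * ∑ j ∈ Finset.range (m + 1), v (t - j + k)) := by
  simp only [coupledStep, slidingAvg, Finset.expect_eq_sum_div_card, Finset.card_range,
    sub_add_eq_add_sub, one_div_mul_eq_div]
  push_cast
  rfl

end CoupledStep

section Potential

variable {m : ℕ} {v : ℤ → ℝ} {N : ℤ}

-- Summation by parts, without boundary terms since `v` is constant off `(0, N - m]`.
theorem sum_mul_slidingAvg_sub_pred (φ : ℤ → ℝ) (hv_zero : ∀ t ≤ 0, v t = 0)
    (hv_top : ∀ t, N - m ≤ t → v t = v N) :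
    ∑ i ∈ Finset.Ioc 0 N, φ i * (slidingAvg m v i - slidingAvg m v (i - 1)) =
      ∑ s ∈ Finset.Ioc 0 N, (𝔼 k ∈ Finset.range (m + 1), φ (s + k)) * (v s - v (s - 1)) := by
  simp only [slidingAvg_sub_pred, Finset.mul_expect, Finset.expect_mul, ← Finset.expect_sum_comm]
  refine Finset.expect_congr rfl fun j hj =>
    Finset.sum_Ioc_mul_shift (e := fun s => v s - v (s - 1)) (Nat.cast_nonneg j) ?_
  intro s hs
  rw [Finset.mem_Ioc, not_and_or, not_lt, not_le] at hs
  have hjm : (j : ℤ) ≤ m := by have := Finset.mem_range.1 hj; omega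
  rcases hs with hs | hs
  · rw [hv_zero s hs, hv_zero (s - 1) (by omega), sub_self]
  · rw [hv_top s (by omega), hv_top (s - 1) (by omega), sub_self]

theorem potential_le_of_le_coupledStep {f : ℝ → ℝ} {K : NNReal}
    (hf : LipschitzOnWith K f (Icc 0 1)) (hN : 0 ≤ N) (hv01 : ∀ t, v t ∈ Icc 0 1)
    (hv : Monotone v) (hv_zero : ∀ t ≤ 0, v t = 0) (hv_top : ∀ t, N - m ≤ t → v t = v N)
    (hsub : ∀ t, 0 < t → v t ≤ coupledStep f m v t) :
    v N ^ 2 / 2 - ∫ z in (0 : ℝ)..v N, f z ≤ K / (2 * (m + 1)) := by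
  set y := slidingAvg m v
  set c : ℝ := K / (2 * (m + 1))
  have hy01 := slidingAvg_mem_Icc (m := m) hv01
  have hyN : y N = v N := slidingAvg_eq_of_forall fun j hj => hv_top _ (by omega)
  have hy0 : y 0 = 0 := slidingAvg_eq_of_forall fun j _ => hv_zero _ (by omega)
  have hstep (i : ℤ) : f (y i) * (y i - y (i - 1)) - c * (y i - y (i - 1)) ≤
      (∫ z in (0 : ℝ)..y i, f z) - ∫ z in (0 : ℝ)..y (i - 1), f z := by
    have hle : y (i - 1) ≤ y i := hv.slidingAvg (by omega)
    have hΔ := slidingAvg_sub_pred_le (m := m) hv01 i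
    have hint (a : ℝ) (ha : a ∈ Icc (0 : ℝ) 1) : IntervalIntegrable f MeasureTheory.volume 0 a :=
      (hf.continuousOn.mono (Icc_subset_Icc le_rfl ha.2)).intervalIntegrable_of_Icc ha.1
    rw [intervalIntegral.integral_interval_sub_left (hint _ (hy01 i)) (hint _ (hy01 (i - 1)))]
    refine le_trans ?_ (intervalIntegral.mul_sub_sub_le_integral_of_lipschitzOnWith hle
      (hf.mono (Icc_subset_Icc (hy01 _).1 (hy01 _).2)))
    have hquad : (K : ℝ) * (y i - y (i - 1)) ^ 2 / 2 ≤ c * (y i - y (i - 1)) :=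
      calc (K : ℝ) * (y i - y (i - 1)) ^ 2 / 2 = K * (y i - y (i - 1)) / 2 * (y i - y (i - 1)) := by
            ring
        _ ≤ K * (y i - y (i - 1)) / 2 * (m + 1 : ℝ)⁻¹ :=
            mul_le_mul_of_nonneg_left hΔ (by have := sub_nonneg.2 hle; positivity)
        _ = c * (y i - y (i - 1)) := by simp only [c]; field_simp
    linarith
  have hsq : v N ^ 2 / 2 ≤ ∑ s ∈ Finset.Ioc 0 N, v s * (v s - v (s - 1)) :=
    calc v N ^ 2 / 2 = ∑ s ∈ Finset.Ioc 0 N, (v s ^ 2 / 2 - v (s - 1) ^ 2 / 2) := by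
          rw [Finset.sum_Ioc_sub_pred (fun s => v s ^ 2 / 2) hN, hv_zero 0 le_rfl]
          ring
      _ ≤ _ := Finset.sum_le_sum fun s _ => by nlinarith [sq_nonneg (v s - v (s - 1))]
  have hswap : ∑ s ∈ Finset.Ioc 0 N, v s * (v s - v (s - 1)) ≤
      ∑ i ∈ Finset.Ioc 0 N, f (y i) * (y i - y (i - 1)) := by
    rw [sum_mul_slidingAvg_sub_pred (fun i => f (y i)) hv_zero hv_top]
    exact Finset.sum_le_sum fun s hs => mul_le_mul_of_nonneg_right
      (hsub s (Finset.mem_Ioc.1 hs).1) (sub_nonneg.2 (hv (by omega)))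
  have hsum := Finset.sum_le_sum fun i (_ : i ∈ Finset.Ioc 0 N) => hstep i
  rw [Finset.sum_sub_distrib, ← Finset.mul_sum, Finset.sum_Ioc_sub_pred y hN,
    Finset.sum_Ioc_sub_pred (fun i => ∫ z in (0 : ℝ)..y i, f z) hN, hy0, hyN,
    intervalIntegral.integral_same, sub_zero, sub_zero] at hsum
  have : c * v N ≤ c := mul_le_of_le_one_right (by positivity) (hv01 N).2
  linarith

end Potential

-- For `t < 0` this is `x 0`, through `Int.toNat`; it is the running maximum only for `x`
-- vanishing at nonpositive sites.
noncomputable def runningMax (x : ℤ → ℝ) (t : ℤ) : ℝ := partialSups (fun n : ℕ => x n) t.toNat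

section RunningMax

variable {x : ℤ → ℝ}

theorem monotone_runningMax : Monotone (runningMax x) :=
  fun _ _ hst => (partialSups _).monotone (Int.toNat_le_toNat hst)

theorem runningMax_le {t : ℤ} {c : ℝ} (ht : 0 ≤ t) (h : ∀ s ∈ Icc 0 t, x s ≤ c) :
    runningMax x t ≤ c :=
  partialSups_le _ _ _ fun n hn => h n ⟨n.cast_nonneg, by omega⟩

theorem le_runningMax (hx : ∀ t ≤ 0, x t = 0) (t : ℤ) : x t ≤ runningMax x t := by
  rcases le_total t 0 with ht | ht
  · rw [hx t ht, ← hx 0 le_rfl]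
    exact le_partialSups_of_le (fun n : ℕ => x n) (Nat.zero_le _)
  · conv_lhs => rw [← Int.toNat_of_nonneg ht]
    exact le_partialSups (fun n : ℕ => x n) t.toNat

theorem runningMax_of_nonpos (hx : ∀ t ≤ 0, x t = 0) {t : ℤ} (ht : t ≤ 0) : runningMax x t = 0 := by
  rw [runningMax, Int.toNat_eq_zero.2 ht, partialSups_zero]
  exact hx 0 le_rfl

theorem runningMax_mem_Icc (hx01 : ∀ t, x t ∈ Icc 0 1) (hx : ∀ t ≤ 0, x t = 0) (t : ℤ) :
    runningMax x t ∈ Icc 0 1 :=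
  ⟨(hx01 t).1.trans (le_runningMax hx t),
    partialSups_le _ _ _ fun n _ => (hx01 n).2⟩

theorem runningMax_eq_of_le {L : ℕ} {t : ℤ} (hx01 : ∀ t, x t ∈ Icc 0 1)
    (hx : ∀ t ≤ 0, x t = 0) (hL : ∀ t, (L : ℤ) < t → x t = 0) (hLt : L ≤ t) :
    runningMax x t = runningMax x L := by
  refine le_antisymm (runningMax_le (by omega) fun s _ => ?_) (monotone_runningMax hLt)
  rcases le_or_gt s L with hsL | hsL
  · exact (le_runningMax hx s).trans (monotone_runningMax hsL)
  · rw [hL s hsL]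
    exact (runningMax_mem_Icc hx01 hx L).1

end RunningMax

section FixedPoint

variable {f : ℝ → ℝ} {m L : ℕ} {x : ℤ → ℝ}

theorem runningMax_le_coupledStep (hf_mono : MonotoneOn f (Icc 0 1))
    (hf_nonneg : ∀ z ∈ Icc 0 1, 0 ≤ f z) (hx01 : ∀ t, x t ∈ Icc 0 1)
    (hsupp : ∀ t ∉ Icc (1 : ℤ) L, x t = 0) (hfix : ∀ t ∈ Icc (1 : ℤ) L, x t = coupledStep f m x t)
    {t : ℤ} (ht : 0 < t) : runningMax x t ≤ coupledStep f m (runningMax x) t := by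
  have hx0 : ∀ t ≤ 0, x t = 0 := fun t ht => hsupp t fun h => by linarith [h.1]
  have hv01 := runningMax_mem_Icc hx01 hx0
  refine runningMax_le ht.le fun s hs => ?_
  by_cases hsL : s ∈ Icc (1 : ℤ) L
  · calc x s = coupledStep f m x s := hfix s hsL
      _ ≤ coupledStep f m (runningMax x) s :=
        coupledStep_le_coupledStep hf_mono hx01 hv01 (le_runningMax hx0) s
      _ ≤ coupledStep f m (runningMax x) t := monotone_runningMax.coupledStep hf_mono hv01 hs.2
  · rw [hsupp s hsL]
    exact coupledStep_nonneg hf_nonneg hv01 t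

theorem eq_zero_of_eq_coupledStep {K : NNReal} {u c : ℝ} (hf : LipschitzOnWith K f (Icc 0 1))
    (hf_mono : MonotoneOn f (Icc 0 1)) (hf_nonneg : ∀ z ∈ Icc 0 1, 0 ≤ f z)
    (hf_lt : ∀ z ∈ Ioo 0 u, f z < z) (hc : 0 < c)
    (hgap : ∀ z ∈ Icc u 1, c ≤ z ^ 2 / 2 - ∫ t in (0 : ℝ)..z, f t) (hm : K ≤ m * c)
    (hx01 : ∀ t, x t ∈ Icc 0 1) (hsupp : ∀ t ∉ Icc (1 : ℤ) L, x t = 0)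
    (hfix : ∀ t ∈ Icc (1 : ℤ) L, x t = coupledStep f m x t) (t : ℤ) : x t = 0 := by
  by_contra hxt
  have htL : t ∈ Icc (1 : ℤ) L := by_contra fun h => hxt (hsupp t h)
  have hx0 : ∀ t ≤ 0, x t = 0 := fun t ht => hsupp t fun h => by linarith [h.1]
  have hxL : ∀ t, (L : ℤ) < t → x t = 0 := fun t ht => hsupp t fun h => by linarith [h.2]
  set v := runningMax x
  set N : ℤ := L + m with hN
  have hNt : t ≤ N := by linarith [htL.2]
  have hv01 := runningMax_mem_Icc hx01 hx0
  have hv_top (s : ℤ) (hs : N - m ≤ s) : v s = v N :=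
    (runningMax_eq_of_le hx01 hx0 hxL (by omega)).trans
      (runningMax_eq_of_le hx01 hx0 hxL (by omega)).symm
  have hsub (s : ℤ) (hs : 0 < s) := runningMax_le_coupledStep hf_mono hf_nonneg hx01 hsupp hfix hs
  have hpot := potential_le_of_le_coupledStep hf (by omega) hv01 monotone_runningMax
    (fun _ => runningMax_of_nonpos hx0) hv_top hsub
  have hvN_pos : 0 < v N := (lt_of_le_of_ne (hx01 t).1 (Ne.symm hxt)).trans_le
    ((le_runningMax hx0 t).trans (monotone_runningMax hNt))
  have hvN_fix : coupledStep f m v N = f (v N) := by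
    rw [coupledStep, Finset.expect_congr rfl fun k _ =>
      congrArg f (slidingAvg_eq_of_forall fun j _ => hv_top _ (by omega)),
      Finset.expect_const Finset.nonempty_range_add_one]
  have hu : u ≤ v N := not_lt.1 fun h =>
    (hf_lt _ ⟨hvN_pos, h⟩).not_ge ((hsub N (by linarith [htL.1])).trans_eq hvN_fix)
  have hcK := (hgap _ ⟨hu, (hv01 N).2⟩).trans hpot
  rw [le_div_iff₀ (by positivity)] at hcK
  nlinarith

end FixedPoint

theorem exists_forall_eq_zero_of_potential_pos {f : ℝ → ℝ} {K : NNReal} {u : ℝ} (hu : 0 ≤ u)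
    (hf : LipschitzOnWith K f (Icc 0 1)) (hf_mono : MonotoneOn f (Icc 0 1))
    (hf_nonneg : ∀ z ∈ Icc 0 1, 0 ≤ f z) (hf_lt : ∀ z ∈ Ioo 0 u, f z < z)
    (hpot : ∀ z ∈ Icc u 1, 0 < z ^ 2 / 2 - ∫ t in (0 : ℝ)..z, f t) :
    ∃ m₀ : ℕ, ∀ m ≥ m₀, ∀ (L : ℕ) (x : ℤ → ℝ), (∀ t, x t ∈ Icc 0 1) →
      (∀ t ∉ Icc (1 : ℤ) L, x t = 0) → (∀ t ∈ Icc (1 : ℤ) L, x t = coupledStep f m x t) →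
      ∀ t, x t = 0 := by
  have hprim : ContinuousOn (fun z => ∫ t in (0 : ℝ)..z, f t) (Icc 0 1) := by
    have hcont : ContinuousOn f (uIcc 0 1) := by
      rw [uIcc_of_le zero_le_one]
      exact hf.continuousOn
    rw [← uIcc_of_le zero_le_one]
    exact intervalIntegral.continuousOn_primitive_interval hcont.integrableOn_uIcc
  obtain ⟨c, hc, hgap⟩ := isCompact_Icc.exists_forall_le'
    (((continuous_pow 2).continuousOn.div_const 2).sub (hprim.mono (Icc_subset_Icc hu le_rfl)))
    hpot
  refine ⟨⌈K / c⌉₊, fun m hm L x hx01 hsupp hfix =>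
    eq_zero_of_eq_coupledStep hf hf_mono hf_nonneg hf_lt hc hgap ?_ hx01 hsupp hfix⟩
  rw [← div_le_iff₀ hc]
  exact (Nat.le_ceil _).trans (Nat.cast_le.2 hm)

theorem exists_lt_of_lt_potentialThreshold {f : ℝ → ℝ → ℝ} {g : ℝ → ℝ} {ε : ℝ} (hε : 0 ≤ ε)
    (h : ε < potentialThreshold f g) :
    ∃ ε' ∈ Icc (0 : ℝ) 1, ε < ε' ∧ 0 < minUnstable f g ε' ∧
      ∀ x ∈ Icc (minUnstable f g ε') 1, 0 < Ufun f g x ε' := by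
  rcases Set.eq_empty_or_nonempty {ε : ℝ | ε ∈ Icc (0 : ℝ) 1 ∧ 0 < minUnstable f g ε ∧
      ∀ x ∈ Icc (minUnstable f g ε) 1, 0 < Ufun f g x ε} with hemp | hne
  · rw [potentialThreshold, hemp, Real.sSup_empty] at h
    exact absurd h hε.not_gt
  · obtain ⟨ε', ⟨hε', hu, hU⟩, hlt⟩ := exists_lt_of_lt_csSup hne h
    exact ⟨ε', hε', hlt, hu, hU⟩

theorem zero_mem_minUnstable_set (f : ℝ → ℝ → ℝ) (g : ℝ → ℝ) (ε : ℝ) :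
    (0 : ℝ) ∈ {xt : ℝ | xt ∈ Icc (0 : ℝ) 1 ∧ ∀ x ∈ Ioo (0 : ℝ) xt, f (g x) ε < x} :=
  ⟨left_mem_Icc.2 zero_le_one, fun _ hx => absurd (hx.1.trans hx.2) (lt_irrefl 0)⟩

theorem minUnstable_le_one (f : ℝ → ℝ → ℝ) (g : ℝ → ℝ) (ε : ℝ) : minUnstable f g ε ≤ 1 :=
  csSup_le ⟨0, zero_mem_minUnstable_set f g ε⟩ fun _ hx => hx.1.2

theorem lt_of_lt_minUnstable {f : ℝ → ℝ → ℝ} {g : ℝ → ℝ} {ε x : ℝ} (hx0 : 0 < x)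
    (hx : x < minUnstable f g ε) : f (g x) ε < x := by
  obtain ⟨_, hxt, hlt⟩ := exists_lt_of_lt_csSup ⟨0, zero_mem_minUnstable_set f g ε⟩ hx
  exact hxt.2 x ⟨hx0, hlt⟩

theorem Ufun_id (f : ℝ → ℝ → ℝ) (x ε : ℝ) :
    Ufun f (fun x => x) x ε = x ^ 2 / 2 - ∫ z in (0 : ℝ)..x, f z ε := by
  simp only [Ufun, Gfun, Ffun, integral_id]
  ring

section Transfer

variable {h : ℝ → ℝ → ℝ}

theorem monotoneOn_left_of_strictMonoOn
    (h_maps : ∀ x ∈ Icc (0:ℝ) 1, ∀ ε ∈ Icc (0:ℝ) 1, h x ε ∈ Icc (0:ℝ) 1)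
    (h_zero : ∀ x ∈ Icc (0:ℝ) 1, ∀ ε ∈ Icc (0:ℝ) 1, h 0 ε = 0 ∧ h x 0 = 0)
    (h_mono_x : ∀ ε ∈ Ioc (0:ℝ) 1, StrictMonoOn (fun x => h x ε) (Ioc (0:ℝ) 1)) :
    ∀ ε ∈ Icc (0:ℝ) 1, MonotoneOn (fun x => h x ε) (Icc 0 1) := by
  intro ε hε
  rcases hε.1.eq_or_lt with rfl | hε0
  · intro x hx y hy _
    simp only [(h_zero x hx 0 hε).2, (h_zero y hy 0 hε).2, le_refl]
  · refine monotoneOn_Icc_of_strictMonoOn_Ioc (h_mono_x ε ⟨hε0, hε.2⟩) fun x hx => ?_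
    simp only [(h_zero x hx ε hε).1]
    exact (h_maps x hx ε hε).1

theorem monotoneOn_right_of_strictMonoOn
    (h_maps : ∀ x ∈ Icc (0:ℝ) 1, ∀ ε ∈ Icc (0:ℝ) 1, h x ε ∈ Icc (0:ℝ) 1)
    (h_zero : ∀ x ∈ Icc (0:ℝ) 1, ∀ ε ∈ Icc (0:ℝ) 1, h 0 ε = 0 ∧ h x 0 = 0)
    (h_mono_eps : ∀ x ∈ Ioc (0:ℝ) 1, StrictMonoOn (fun ε => h x ε) (Ioc (0:ℝ) 1)) :
    ∀ x ∈ Icc (0:ℝ) 1, MonotoneOn (fun ε => h x ε) (Icc 0 1) := by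
  intro x hx
  rcases hx.1.eq_or_lt with rfl | hx0
  · intro ε hε ε' hε' _
    simp only [(h_zero 0 hx ε hε).1, (h_zero 0 hx ε' hε').1, le_refl]
  · refine monotoneOn_Icc_of_strictMonoOn_Ioc (h_mono_eps x ⟨hx0, hx.2⟩) fun ε hε => ?_
    simp only [(h_zero x hx ε hε).2]
    exact (h_maps x hx ε hε).1

theorem apply_mul_le_apply_mul
    (hmono₁ : ∀ ε ∈ Icc (0:ℝ) 1, MonotoneOn (fun x => h x ε) (Icc 0 1))
    (hmono₂ : ∀ x ∈ Icc (0:ℝ) 1, MonotoneOn (fun ε => h x ε) (Icc 0 1)) {ε ε' z : ℝ}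
    (hε : ε ∈ Icc (0:ℝ) 1) (hε' : ε' ∈ Icc (0:ℝ) 1) (hεε' : ε ≤ ε') (hz : z ∈ Icc (0:ℝ) 1) :
    h (ε * z) ε ≤ h (ε' * z) ε' :=
  (hmono₂ _ (unitInterval.mul_mem hε hz) hε hε' hεε').trans
    (hmono₁ ε' hε' (unitInterval.mul_mem hε hz) (unitInterval.mul_mem hε' hz)
      (mul_le_mul_of_nonneg_right hεε' hz.1))

end Transfer

/-- threshold saturation for spatially coupled parallel
concatenated codes.  Here `h` is the BCJR transfer function of the component
encoder, the underlying scalar admissible system is `f(x,ε) = h(ε·x,ε)`,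
`g(x) = x`, and `ε*` is its potential threshold. -/
theorem threshold_saturation_SC_PCC
    (h : ℝ → ℝ → ℝ)
    (h_maps : ∀ x ∈ Icc (0:ℝ) 1, ∀ ε ∈ Icc (0:ℝ) 1, h x ε ∈ Icc (0:ℝ) 1)
    (h_zero : ∀ x ∈ Icc (0:ℝ) 1, ∀ ε ∈ Icc (0:ℝ) 1, h 0 ε = 0 ∧ h x 0 = 0)
    (h_mono_x : ∀ ε ∈ Ioc (0:ℝ) 1, StrictMonoOn (fun x => h x ε) (Ioc (0:ℝ) 1))
    (h_mono_eps : ∀ x ∈ Ioc (0:ℝ) 1, StrictMonoOn (fun ε => h x ε) (Ioc (0:ℝ) 1))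
    (h_smooth : ContDiffOn ℝ 2 (fun p : ℝ × ℝ => h p.1 p.2)
      (Icc (0:ℝ) 1 ×ˢ Icc (0:ℝ) 1)) :
    ∀ ε ∈ Icc (0:ℝ) 1,
      ε < potentialThreshold (fun x ε' => h (ε' * x) ε') (fun x => x) →
      ∃ m₀ : ℕ, ∀ m : ℕ, m₀ ≤ m → ∀ L : ℕ, ∀ x : ℤ → ℝ,
        (∀ t : ℤ, x t ∈ Icc (0:ℝ) 1) →
        (∀ t : ℤ, t ∉ Icc (1:ℤ) (L:ℤ) → x t = 0) →
        (∀ t ∈ Icc (1:ℤ) (L:ℤ),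
          x t = (1 / (m + 1 : ℝ)) * ∑ k ∈ Finset.range (m + 1),
            h ((ε / (m + 1 : ℝ)) * ∑ j ∈ Finset.range (m + 1),
                x (t - (j : ℤ) + (k : ℤ))) ε) →
        ∀ t : ℤ, x t = 0 := by
  intro ε hε hlt
  obtain ⟨ε', hε', hεε', hu, hU⟩ := exists_lt_of_lt_potentialThreshold hε.1 hlt
  have hmono₁ := monotoneOn_left_of_strictMonoOn h_maps h_zero h_mono_x
  have hmono₂ := monotoneOn_right_of_strictMonoOn h_maps h_zero h_mono_eps
  have hsmooth {δ : ℝ} (hδ : δ ∈ Icc (0 : ℝ) 1) : ContDiffOn ℝ 2 (fun z => h (δ * z) δ) (Icc 0 1) :=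
    h_smooth.comp (f := fun z => (δ * z, δ)) (by fun_prop)
      fun z hz => ⟨unitInterval.mul_mem hδ hz, hδ⟩
  have hle (z : ℝ) (hz : z ∈ Icc (0 : ℝ) 1) : h (ε * z) ε ≤ h (ε' * z) ε' :=
    apply_mul_le_apply_mul hmono₁ hmono₂ hε hε' hεε'.le hz
  obtain ⟨K, hK⟩ := (hsmooth hε).exists_lipschitzOnWith two_ne_zero (convex_Icc 0 1) isCompact_Icc
  obtain ⟨m₀, hm₀⟩ := exists_forall_eq_zero_of_potential_pos hu.le hK
    ((hmono₁ ε hε).comp ((monotone_mul_left_of_nonneg hε.1).monotoneOn _)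
      fun z hz => unitInterval.mul_mem hε hz)
    (fun z hz => (h_maps _ (unitInterval.mul_mem hε hz) ε hε).1)
    (fun z hz => (hle z ⟨hz.1.le, hz.2.le.trans (minUnstable_le_one _ _ _)⟩).trans_lt
      (lt_of_lt_minUnstable hz.1 hz.2))
    (fun z hz => (hU z hz).trans_le (by
      rw [Ufun_id]
      gcongr
      exact intervalIntegral.integral_le_integral_of_continuousOn (hsmooth hε).continuousOn
        (hsmooth hε').continuousOn hle ⟨hu.le.trans hz.1, hz.2⟩))
  refine ⟨m₀, fun m hm L x hx01 hsupp hfix => hm₀ m hm L x hx01 hsupp fun t ht => ?_⟩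
  rw [hfix t ht, coupledStep_eq_sum]
  simp only [← mul_assoc, mul_one_div]
end
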